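/- arXiv:2301.05922 — 7 statements merged into one kernel-verified Lean document; each statement's English description precedes it below -/
import Mathlib

section
/- Let p be an odd prime and let r be a positive integer. The reduction-modulo-p homomorphism π : GL_r(ℤ) → GL_r(ℤ/pℤ) is injective on every finite subgroup of GL_r(ℤ); that is, if H is a finite subgroup of GL_r(ℤ), then the restriction of π to H is injective. -/
open Finset

lemma key_step (p q : ℕ) (hp : p.Prime) (hodd : Odd p) (hq : q.Prime) {r : ℕ}
    (M : Matrix (Fin r) (Fin r) ℤ) (hM : (1 + M) ^ q = 1) (k : ℕ) (hk : 1 ≤ k)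
    (hdvd : ∀ i j, (p : ℤ) ^ k ∣ M i j) : ∀ i j, (p : ℤ) ^ (k + 1) ∣ M i j := by
  have hp3 : 3 ≤ p := by
    have := hp.two_le
    rcases Nat.lt_or_ge p 3 with h | h
    · interval_cases p
      · exact absurd hodd (by norm_num)
    · exact h
  have hpZ : Prime (p : ℤ) := Int.prime_iff_natAbs_prime.mpr (by simpa using hp)
  set N : Matrix (Fin r) (Fin r) ℤ := fun i j => M i j / (p : ℤ) ^ k with hN
  have hMN : M = ((p : ℤ) ^ k) • N := by
    ext i j
    simp only [hN, Matrix.smul_apply, smul_eq_mul]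
    exact (Int.mul_ediv_cancel' (hdvd i j)).symm
  have hcomm : Commute M (1 : Matrix (Fin r) (Fin r) ℤ) := Commute.one_right M
  have hexp := hcomm.add_pow q
  rw [add_comm] at hM
  rw [hM] at hexp
  simp only [one_pow, mul_one] at hexp
  rw [Finset.sum_range_succ'] at hexp
  simp only [pow_zero, Nat.choose_zero_right, Nat.cast_one, one_mul, mul_one] at hexp
  have hsum : ∑ m ∈ range q, M ^ (m + 1) * ((q.choose (m + 1) : ℕ) : Matrix (Fin r) (Fin r) ℤ) = 0 := by
    rwa [eq_comm, add_eq_right] at hexp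
  have hsum2 : ∑ m ∈ range q, (((p:ℤ)^k)^(m+1) * (q.choose (m+1) : ℤ)) • N ^ (m+1) = 0 := by
    rw [← hsum]
    apply Finset.sum_congr rfl
    intro m _
    rw [hMN, smul_pow, smul_mul_assoc,
      ← (Nat.cast_commute (q.choose (m+1)) (N ^ (m+1))).eq,
      ← nsmul_eq_mul, ← natCast_zsmul, smul_smul]
  intro i j
  have hentry : ∑ m ∈ range q, (((p:ℤ)^k)^(m+1) * (q.choose (m+1) : ℤ)) * (N ^ (m+1)) i j = 0 := by
    have h1 := congrFun (congrFun hsum2 i) j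
    rw [show ((0 : Matrix (Fin r) (Fin r) ℤ) i j) = 0 from rfl] at h1
    rw [← h1, Matrix.sum_apply]
    apply Finset.sum_congr rfl
    intro m _
    rfl
  have hfac : ∀ m, (((p:ℤ)^k)^(m+1) * (q.choose (m+1) : ℤ)) * (N ^ (m+1)) i j
      = (p:ℤ)^k * (((p:ℤ)^k)^m * (q.choose (m+1) : ℤ) * (N ^ (m+1)) i j) := by
    intro m; ring
  have hpk : ((p:ℤ)^k) ≠ 0 := pow_ne_zero _ (by exact_mod_cast hp.ne_zero)
  have hsum3 : ∑ m ∈ range q, ((p:ℤ)^k)^m * (q.choose (m+1) : ℤ) * (N ^ (m+1)) i j = 0 := by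
    have h2 : (p:ℤ)^k * ∑ m ∈ range q, ((p:ℤ)^k)^m * (q.choose (m+1) : ℤ) * (N ^ (m+1)) i j = 0 := by
      rw [Finset.mul_sum, ← hentry]
      exact Finset.sum_congr rfl fun m _ => (hfac m).symm
    exact (mul_eq_zero.mp h2).resolve_left hpk
  obtain ⟨q', rfl⟩ : ∃ q', q = q' + 1 := ⟨q - 1, (Nat.succ_pred_eq_of_pos hq.pos).symm⟩
  rw [Finset.sum_range_succ'] at hsum3
  have hqN := eq_neg_of_add_eq_zero_right hsum3
  simp only [zero_add, pow_zero, pow_one, one_mul, Nat.choose_one_right] at hqN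
  have hdvdN : (p : ℤ) ∣ N i j := by
    by_cases hqp : q' + 1 = p
    · rw [hqp] at hqN
      have h2 : ((p:ℤ))^2 ∣
          ∑ m ∈ range q', ((p:ℤ)^k)^(m+1) * ((p).choose (m+1+1) : ℤ) * (N ^ (m+1+1)) i j := by
        apply Finset.dvd_sum
        intro m hm
        rw [Finset.mem_range] at hm
        rcases Nat.lt_or_ge (m + 2) p with hlt | hge
        · have hc : (p:ℤ) ∣ ((p).choose (m+1+1) : ℤ) :=
            Int.natCast_dvd_natCast.mpr (Nat.Prime.dvd_choose_self hp (by omega) (by omega))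
          have hpow : (p:ℤ) ∣ ((p:ℤ)^k)^(m+1) :=
            dvd_pow (dvd_pow_self _ (by omega)) (by omega)
          rw [sq]
          exact (mul_dvd_mul hpow hc).mul_right _
        · have h2pow : ((p:ℤ))^2 ∣ ((p:ℤ)^k)^(m+1) := by
            rw [← pow_mul]
            apply pow_dvd_pow
            have h1 : 2 ≤ m + 1 := by omega
            calc 2 ≤ m + 1 := h1
              _ ≤ k * (m + 1) := Nat.le_mul_of_pos_left _ hk
          exact ((h2pow.mul_right _).mul_right _)
      have hpp : ((p:ℤ))^2 ∣ (p:ℤ) * N i j := by rw [hqN]; exact h2.neg_right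
      rw [sq] at hpp
      exact (mul_dvd_mul_iff_left (by exact_mod_cast hp.ne_zero : (p:ℤ) ≠ 0)).mp hpp
    · have h1 : (p:ℤ) ∣ ((q'+1 : ℕ) : ℤ) * N i j := by
        rw [hqN]
        apply Dvd.dvd.neg_right
        apply Finset.dvd_sum
        intro m _
        have hpow : (p:ℤ) ∣ ((p:ℤ)^k)^(m+1) := dvd_pow (dvd_pow_self _ (by omega)) (by omega)
        exact (hpow.mul_right _).mul_right _
      rcases hpZ.dvd_mul.mp h1 with h | h
      · exfalso
        have hd : p ∣ q' + 1 := by exact_mod_cast h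
        exact hqp ((Nat.prime_dvd_prime_iff_eq hp hq).mp hd).symm
      · exact h
  have hMijN : M i j = (p:ℤ) ^ k * N i j := by rw [hMN]; rfl
  rw [hMijN, pow_succ]
  exact mul_dvd_mul dvd_rfl hdvdN

lemma entries_zero (p q : ℕ) (hp : p.Prime) (hodd : Odd p) (hq : q.Prime) {r : ℕ}
    (M : Matrix (Fin r) (Fin r) ℤ) (hM : (1 + M) ^ q = 1)
    (hd : ∀ i j, (p : ℤ) ∣ M i j) : M = 0 := by
  have hall : ∀ k, ∀ i j, (p:ℤ) ^ (k+1) ∣ M i j := by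
    intro k
    induction k with
    | zero => simpa using hd
    | succ n ih => exact key_step p q hp hodd hq M hM (n+1) (by omega) ih
  ext i j
  by_contra hne
  set n := (M i j).natAbs with hn
  have habs : |M i j| = (n : ℤ) := Int.abs_eq_natAbs _
  have hle : (p:ℤ) ^ (n+1) ≤ |M i j| :=
    Int.le_of_dvd (abs_pos.mpr hne) ((dvd_abs _ _).mpr (hall n i j))
  have hlt : (n : ℤ) < (p:ℤ) ^ (n+1) := by
    have h1 : n < p ^ (n+1) := by
      calc n < p ^ n := Nat.lt_pow_self hp.one_lt
        _ ≤ p ^ (n+1) := Nat.pow_le_pow_right hp.pos (by omega)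
    exact_mod_cast h1
  rw [habs] at hle
  omega

lemma mat_eq_one (p : ℕ) (hp : p.Prime) (hodd : Odd p) {r : ℕ} :
    ∀ n, 0 < n → ∀ A : Matrix (Fin r) (Fin r) ℤ, A ^ n = 1 →
      A.map (Int.castRingHom (ZMod p)) = 1 → A = 1 := by
  intro n
  induction n using Nat.strong_induction_on with
  | _ n ih =>
    intro hn A hAn hAmap
    rcases eq_or_lt_of_le (show 1 ≤ n from hn) with h1 | h1
    · rwa [← h1, pow_one] at hAn
    · -- n ≥ 2
      have hn1 : n ≠ 1 := by omega
      set q := n.minFac with hqdef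
      have hq : q.Prime := Nat.minFac_prime hn1
      set B := A ^ (n / q) with hB
      have hBq : B ^ q = 1 := by
        rw [hB, ← pow_mul, Nat.div_mul_cancel (Nat.minFac_dvd n), hAn]
      have hBmap : B.map (Int.castRingHom (ZMod p)) = 1 := by
        have : (Int.castRingHom (ZMod p)).mapMatrix B = ((Int.castRingHom (ZMod p)).mapMatrix A) ^ (n / q) := by
          rw [hB, map_pow]
        rw [RingHom.mapMatrix_apply, RingHom.mapMatrix_apply] at this
        rw [this, hAmap, one_pow]
      have hMd : ∀ i j, (p : ℤ) ∣ (B - 1) i j := by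
        intro i j
        have h0 : (Int.castRingHom (ZMod p)).mapMatrix (B - 1) = 0 := by
          rw [map_sub, map_one, RingHom.mapMatrix_apply, hBmap, sub_self]
        have h1' := congrFun (congrFun h0 i) j
        rw [RingHom.mapMatrix_apply] at h1'
        have h2' : ((( B - 1) i j : ℤ) : ZMod p) = 0 := h1'
        exact (ZMod.intCast_zmod_eq_zero_iff_dvd _ _).mp h2'
      have hB1 : B = 1 := by
        have h0 : (1 + (B - 1)) ^ q = 1 := by
          rw [add_sub_cancel, hBq]
        have := entries_zero p q hp hodd hq (B - 1) h0 hMd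
        linear_combination (norm := abel) this
      have hdivlt : n / q < n := Nat.div_lt_self (by omega) hq.one_lt
      have hdivpos : 0 < n / q := Nat.div_pos (Nat.minFac_le (by omega)) hq.pos
      exact ih (n / q) hdivlt hdivpos A hB1 hAmap


/-- Let `p` be an odd prime and `r` a positive integer. The
reduction-modulo-`p` homomorphism `π : GL_r(ℤ) → GL_r(ℤ/pℤ)` (induced by entrywise
reduction of matrix entries) is injective on every finite subgroup of `GL_r(ℤ)`. -/
theorem reduction_mod_p_injective_on_finite_subgroups
    (p : ℕ) (hp : p.Prime) (hodd : Odd p) (r : ℕ) (hr : 0 < r)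
    (H : Subgroup (GL (Fin r) ℤ)) (hH : Finite H) :
    Set.InjOn (Matrix.GeneralLinearGroup.map (Int.castRingHom (ZMod p)))
      (H : Set (GL (Fin r) ℤ)) := by
  intro x hx y hy hxy
  set f := Int.castRingHom (ZMod p) with hf
  set π := Matrix.GeneralLinearGroup.map (R := ℤ) (S := ZMod p) (n := Fin r) f with hπ
  have ha : x⁻¹ * y ∈ H := H.mul_mem (H.inv_mem hx) hy
  set a : GL (Fin r) ℤ := x⁻¹ * y with haa
  have hπa : π a = 1 := by
    rw [haa, map_mul, map_inv, hxy, inv_mul_cancel]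
  -- a has finite order
  set n := orderOf (⟨a, ha⟩ : H) with hn
  have hnpos : 0 < n := orderOf_pos _
  have han : a ^ n = 1 := by
    have h1 : (⟨a, ha⟩ : H) ^ n = 1 := pow_orderOf_eq_one _
    have h2 := congrArg (Subtype.val) h1
    simpa using h2
  -- pass to matrices
  have hmatn : (a : Matrix (Fin r) (Fin r) ℤ) ^ n = 1 := by
    have := congrArg Units.val han
    simpa [Units.val_pow_eq_pow_val] using this
  have hmap : (a : Matrix (Fin r) (Fin r) ℤ).map f = 1 := by
    have := congrArg Units.val hπa
    simpa [hπ, Matrix.GeneralLinearGroup.map, RingHom.mapMatrix_apply] using this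
  have hA1 : (a : Matrix (Fin r) (Fin r) ℤ) = 1 := mat_eq_one p hp hodd n hnpos _ hmatn hmap
  have : a = 1 := Units.ext hA1
  rw [haa] at this
  exact (inv_mul_eq_one.mp this)
end

section
/- For every odd prime p there exists a number field L, a finite extension of ℚ inside ℂ, such that L/ℚ is a Galois extension whose Galois group is cyclic of order p, and such that L ∩ ℚ(ζ) = ℚ, where ζ is a primitive p²-th root of unity in ℂ. -/
open IntermediateField Polynomial

lemma aux_finrank_adjoin {x : ℂ} {n : ℕ} (hn : 0 < n) (hx : IsPrimitiveRoot x n) :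
    Module.finrank ℚ (IntermediateField.adjoin ℚ {x}) = n.totient := by
  have hint : IsIntegral ℚ x := (hx.isIntegral hn).tower_top
  rw [IntermediateField.adjoin.finrank hint, ← cyclotomic_eq_minpoly_rat hx hn,
    natDegree_cyclotomic]

lemma aux_fd {x : ℂ} {n : ℕ} (hn : 0 < n) (hx : IsPrimitiveRoot x n) :
    FiniteDimensional ℚ (IntermediateField.adjoin ℚ {x}) :=
  IntermediateField.adjoin.finiteDimensional ((hx.isIntegral hn).tower_top)

lemma aux_cyclo_ext {x : ℂ} {n : ℕ+} (hx : IsPrimitiveRoot x (n : ℕ)) :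
    IsCyclotomicExtension {(n : ℕ)} ℚ (IntermediateField.adjoin ℚ {x}) := by
  have hint : IsIntegral ℚ x := (hx.isIntegral n.pos).tower_top
  have h := hx.adjoin_isCyclotomicExtension ℚ (n := n)
  exact IsCyclotomicExtension.equiv {(n : ℕ)} ℚ _
    (Subalgebra.equivOfEq _ _ (IntermediateField.adjoin_simple_toSubalgebra_of_isAlgebraic hint.isAlgebraic).symm)

lemma aux_inf_bot {x y : ℂ} {m n : ℕ} (hm : 0 < m) (hn : 0 < n) (hx : IsPrimitiveRoot x m)
    (hy : IsPrimitiveRoot y n) (hco : m.Coprime n) :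
    IntermediateField.adjoin ℚ {x} ⊓ IntermediateField.adjoin ℚ {y} = ⊥ := by
  set A := IntermediateField.adjoin ℚ {x} with hA
  set B := IntermediateField.adjoin ℚ {y} with hB
  haveI : FiniteDimensional ℚ A := aux_fd hm hx
  haveI : FiniteDimensional ℚ B := aux_fd hn hy
  haveI : FiniteDimensional ℚ ↥(A ⊔ B) := IntermediateField.finiteDimensional_sup A B
  have hxm : x ∈ A ⊔ B := le_sup_left (α := IntermediateField ℚ ℂ)
    (IntermediateField.mem_adjoin_simple_self ℚ x)
  have hym : y ∈ A ⊔ B := le_sup_right (α := IntermediateField ℚ ℂ)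
    (IntermediateField.mem_adjoin_simple_self ℚ y)
  have hx' : IsPrimitiveRoot (⟨x, hxm⟩ : ↥(A ⊔ B)) m := by
    rw [← IsPrimitiveRoot.coe_submonoidClass_iff]; exact hx
  have hy' : IsPrimitiveRoot (⟨y, hym⟩ : ↥(A ⊔ B)) n := by
    rw [← IsPrimitiveRoot.coe_submonoidClass_iff]; exact hy
  have hlcm : Nat.lcm m n = m * n := hco.lcm_eq_mul
  have lower := IsPrimitiveRoot.lcm_totient_le_finrank hx' hy'
    (Polynomial.cyclotomic.irreducible_rat
      (Nat.pos_of_ne_zero (Nat.lcm_ne_zero hm.ne' hn.ne')))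
  have upper := IntermediateField.finrank_sup_le A B
  have hfr : Module.finrank ℚ ↥(A ⊔ B) = Module.finrank ℚ A * Module.finrank ℚ B := by
    refine le_antisymm upper ?_
    rw [hA, hB, aux_finrank_adjoin hm hx, aux_finrank_adjoin hn hy, ← Nat.totient_mul hco,
      ← hlcm]
    exact lower
  exact (IntermediateField.LinearDisjoint.of_finrank_sup hfr).inf_eq_bot

set_option maxHeartbeats 1000000 in
set_option synthInstance.maxHeartbeats 400000 in
lemma aux_exists_sub {p q : ℕ} (hp : p.Prime) (hq : q.Prime) (hdvd : p ∣ q - 1)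
    {ζq : ℂ} (hζq : IsPrimitiveRoot ζq q) :
    ∃ L : IntermediateField ℚ ℂ, L ≤ IntermediateField.adjoin ℚ {ζq} ∧
      FiniteDimensional ℚ L ∧ IsGalois ℚ L ∧ IsCyclic (L ≃ₐ[ℚ] L) ∧
      Nat.card (L ≃ₐ[ℚ] L) = p := by
  classical
  haveI : Fact p.Prime := ⟨hp⟩
  set K := IntermediateField.adjoin ℚ {ζq} with hK
  haveI : NeZero q := ⟨hq.ne_zero⟩
  haveI : IsCyclotomicExtension {q} ℚ K := aux_cyclo_ext (n := ⟨q, hq.pos⟩) hζq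
  haveI : FiniteDimensional ℚ K := aux_fd hq.pos hζq
  haveI : IsGalois ℚ K := IsCyclotomicExtension.isGalois {q} ℚ K
  haveI : Fact q.Prime := ⟨hq⟩
  have e : (↥K ≃ₐ[ℚ] ↥K) ≃* (ZMod q)ˣ := IsCyclotomicExtension.autEquivPow ↥K
    (Polynomial.cyclotomic.irreducible_rat hq.pos)
  haveI : IsCyclic (↥K ≃ₐ[ℚ] ↥K) := isCyclic_of_surjective e.symm e.symm.surjective
  have hcardG : Nat.card (↥K ≃ₐ[ℚ] ↥K) = q - 1 := by
    rw [Nat.card_congr e.toEquiv, Nat.card_eq_fintype_card, ZMod.card_units_eq_totient,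
      Nat.totient_prime hq]
  obtain ⟨g, hg⟩ := IsCyclic.exists_generator (α := ↥K ≃ₐ[ℚ] ↥K)
  have horder : orderOf g = q - 1 := by
    rw [← hcardG]
    exact orderOf_eq_card_of_forall_mem_zpowers hg
  set H := Subgroup.zpowers (g ^ p) with hH
  have hN0 : q - 1 ≠ 0 := by have := hq.two_le; omega
  have hgcd : Nat.gcd (q - 1) p = p := Nat.gcd_eq_right hdvd
  have hcardH : Nat.card H = (q - 1) / p := by
    rw [hH, Nat.card_zpowers, orderOf_pow, horder, hgcd]
  have hpq : (q - 1) / p * p = q - 1 := Nat.div_mul_cancel hdvd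
  have hne : (q - 1) / p ≠ 0 := by
    intro h0
    rw [h0, zero_mul] at hpq
    exact hN0 hpq.symm
  have hcomm : ∀ a b : ↥K ≃ₐ[ℚ] ↥K, a * b = b * a := by
    intro a b
    obtain ⟨m, hm⟩ := hg a
    obtain ⟨n, hn⟩ := hg b
    rw [← hm, ← hn, ← zpow_add, ← zpow_add, add_comm]
  haveI hHn : H.Normal := ⟨fun nn hn gg => by
    rw [hcomm gg nn, mul_assoc]
    simpa⟩
  set F := IntermediateField.fixedField H with hF
  haveI : IsGalois ℚ ↥F := IsGalois.of_fixedField_normal_subgroup H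
  have hfrFK : Module.finrank ↥F ↥K = (q - 1) / p := by
    rw [hF, IntermediateField.finrank_fixedField_eq_card, hcardH]
  have hKfr : Module.finrank ℚ ↥K = q - 1 := by
    rw [← IsGalois.card_aut_eq_finrank, hcardG]
  have hfr : Module.finrank ℚ ↥F = p := by
    have ht : Module.finrank ℚ ↥F * Module.finrank ↥F ↥K = Module.finrank ℚ ↥K :=
      Module.finrank_mul_finrank ℚ ↥F ↥K
    rw [hfrFK, hKfr] at ht
    have h2 : p * ((q - 1) / p) = q - 1 := Nat.mul_div_cancel' hdvd
    have h3 : Module.finrank ℚ ↥F * ((q - 1) / p) = p * ((q - 1) / p) := ht.trans h2.symm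
    exact Nat.eq_of_mul_eq_mul_right (Nat.pos_of_ne_zero hne) h3
  refine ⟨IntermediateField.lift F, IntermediateField.lift_le F, ?_, ?_, ?_, ?_⟩ <;>
    [skip; skip; skip; skip]
  case _ =>
    exact Module.Finite.equiv (IntermediateField.liftAlgEquiv F).toLinearEquiv
  case _ =>
    exact @IsGalois.of_algEquiv _ _ _ _ _ _ _ _ (by assumption) (IntermediateField.liftAlgEquiv F)
  case _ =>
    haveI : FiniteDimensional ℚ ↥(IntermediateField.lift F) :=
      Module.Finite.equiv (IntermediateField.liftAlgEquiv F).toLinearEquiv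
    haveI : IsGalois ℚ ↥(IntermediateField.lift F) :=
      @IsGalois.of_algEquiv _ _ _ _ _ _ _ _ (by assumption) (IntermediateField.liftAlgEquiv F)
    refine isCyclic_of_prime_card (p := p) ?_
    rw [IsGalois.card_aut_eq_finrank,
      ← (IntermediateField.liftAlgEquiv F).toLinearEquiv.finrank_eq]
    exact hfr
  case _ =>
    haveI : FiniteDimensional ℚ ↥(IntermediateField.lift F) :=
      Module.Finite.equiv (IntermediateField.liftAlgEquiv F).toLinearEquiv
    haveI : IsGalois ℚ ↥(IntermediateField.lift F) :=
      @IsGalois.of_algEquiv _ _ _ _ _ _ _ _ (by assumption) (IntermediateField.liftAlgEquiv F)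
    rw [IsGalois.card_aut_eq_finrank,
      ← (IntermediateField.liftAlgEquiv F).toLinearEquiv.finrank_eq]
    exact hfr


/-- For every odd prime `p` there exists a number field `L` (a finite
extension of `ℚ` inside `ℂ`) such that `L/ℚ` is Galois with cyclic Galois group of
order `p`, and `L ∩ ℚ(ζ) = ℚ`, where `ζ ∈ ℂ` is a primitive `p²`-th root of unity. -/
theorem exists_cyclic_degree_p_field_disjoint_from_cyclotomic
    (p : ℕ) (hp : p.Prime) (hodd : Odd p) (ζ : ℂ) (hζ : IsPrimitiveRoot ζ (p ^ 2)) :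
    ∃ L : IntermediateField ℚ ℂ, FiniteDimensional ℚ L ∧ IsGalois ℚ L ∧
      IsCyclic (L ≃ₐ[ℚ] L) ∧ Nat.card (L ≃ₐ[ℚ] L) = p ∧
      L ⊓ IntermediateField.adjoin ℚ {ζ} = ⊥ := by
  obtain ⟨q, hq, hqgt, hqmod⟩ := Nat.exists_prime_gt_modEq_one (k := p) p hp.ne_zero
  have hq1 : 1 ≤ q := hq.one_lt.le
  have hdvd : p ∣ q - 1 := (Nat.modEq_iff_dvd' hq1).mp hqmod.symm
  have hζq : IsPrimitiveRoot (Complex.exp (2 * Real.pi * Complex.I / q)) q :=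
    Complex.isPrimitiveRoot_exp q hq.pos.ne'
  obtain ⟨L, hLle, hfd, hgal, hcyc, hcard⟩ := aux_exists_sub hp hq hdvd hζq
  refine ⟨L, hfd, hgal, hcyc, hcard, ?_⟩
  have hco : q.Coprime (p ^ 2) :=
    (Nat.coprime_primes hq hp).mpr (fun h => absurd h (by omega)) |>.pow_right 2
  have hbot := aux_inf_bot hq.pos (pow_pos hp.pos 2) hζq hζ hco
  refine le_antisymm ?_ bot_le
  calc L ⊓ IntermediateField.adjoin ℚ {ζ}
      ≤ IntermediateField.adjoin ℚ {Complex.exp (2 * Real.pi * Complex.I / q)} ⊓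
        IntermediateField.adjoin ℚ {ζ} := inf_le_inf_right _ hLle
    _ = ⊥ := hbot
end

section
/- Let p be an odd prime. The subgroup of GL_{p−1}(ℤ/p²ℤ) generated by γ1 and γ2 is isomorphic to (ℤ/pℤ)²; in particular γ1 and γ2 commute, each has order p, and the subgroup they generate has order p². -/
/-- The matrix `γ1 ∈ GL_{p-1}(ℤ/p²ℤ)`: the `(i+1, i)`-entry equals `1` for
`1 ≤ i ≤ p-2` (one-based indexing), all entries of the last column equal `-1`, and all
other entries are `0`; this is the companion matrix of `x^{p-1} + ⋯ + x + 1`. -/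
def gamma1 (p : ℕ) : Matrix (Fin (p - 1)) (Fin (p - 1)) (ZMod (p ^ 2)) :=
  fun i j => if (j : ℕ) = p - 2 then -1 else if (i : ℕ) = (j : ℕ) + 1 then 1 else 0

/-- The matrix `γ2 = (p+1)·Id ∈ GL_{p-1}(ℤ/p²ℤ)`. -/
def gamma2 (p : ℕ) : Matrix (Fin (p - 1)) (Fin (p - 1)) (ZMod (p ^ 2)) :=
  ((p : ZMod (p ^ 2)) + 1) • 1

namespace GammaAux
open Matrix

variable {p : ℕ}

lemma mulVec_single_lt (hp3 : 3 ≤ p) (j : Fin (p - 1)) (hj : (j : ℕ) < p - 2) :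
    gamma1 p *ᵥ Pi.single j 1 =
      Pi.single (⟨(j : ℕ) + 1, by omega⟩ : Fin (p - 1)) 1 := by
  funext i
  simp only [Matrix.mulVec_single_one, Matrix.col_apply, gamma1, Pi.single_apply, Fin.ext_iff]
  rw [if_neg (by omega)]

lemma mulVec_single_last (hp3 : 3 ≤ p) (j : Fin (p - 1)) (hj : (j : ℕ) = p - 2) :
    gamma1 p *ᵥ Pi.single j 1 = fun _ => -1 := by
  funext i
  simp only [Matrix.mulVec_single_one, Matrix.col_apply, gamma1, if_pos hj]

lemma row_sum (hp3 : 3 ≤ p) (i : Fin (p - 1)) :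
    ∑ j, gamma1 p i j = if (i : ℕ) = 0 then -1 else 0 := by
  have hL : (⟨p - 2, by omega⟩ : Fin (p - 1)) ∈ Finset.univ := Finset.mem_univ _
  rw [← Finset.add_sum_erase _ _ hL]
  have h1 : gamma1 p i ⟨p - 2, by omega⟩ = -1 := by simp [gamma1]
  rw [h1]
  by_cases hi : (i : ℕ) = 0
  · rw [Finset.sum_eq_zero, if_pos hi, add_zero]
    intro j hj
    have hj2 : (j : ℕ) ≠ p - 2 := by
      intro h
      exact (Finset.mem_erase.mp hj).1 (Fin.ext (by simpa using h))
    simp only [gamma1, if_neg hj2]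
    rw [if_neg (by omega)]
  · rw [if_neg hi]
    have hilt : (i : ℕ) < p - 1 := i.isLt
    rw [Finset.sum_eq_single_of_mem (⟨(i : ℕ) - 1, by omega⟩ : Fin (p - 1))]
    · simp only [gamma1]
      rw [if_neg (by omega), if_pos (by omega), neg_add_cancel]
    · refine Finset.mem_erase.mpr ⟨?_, Finset.mem_univ _⟩
      intro h
      have := Fin.ext_iff.mp h
      simp at this
      omega
    · intro b hb hbne
      have hb2 : (b : ℕ) ≠ p - 2 := by
        intro h
        exact (Finset.mem_erase.mp hb).1 (Fin.ext (by simpa using h))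
      simp only [gamma1, if_neg hb2]
      rw [if_neg]
      intro h
      exact hbne (Fin.ext (by simp only [Fin.val_mk]; omega))

lemma mulVec_neg_one (hp3 : 3 ≤ p) :
    gamma1 p *ᵥ (fun _ => (-1 : ZMod (p ^ 2))) =
      Pi.single (⟨0, by omega⟩ : Fin (p - 1)) 1 := by
  funext i
  show ∑ j, gamma1 p i j * (-1) = _
  simp only [mul_neg_one]
  rw [show (∑ x, -gamma1 p i x) = -∑ x, gamma1 p i x from by
    rw [Finset.sum_neg_distrib], row_sum hp3, Pi.single_apply]
  by_cases hi : (i : ℕ) = 0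
  · rw [if_pos hi, if_pos (Fin.ext (by simpa using hi))]; ring
  · rw [if_neg hi, if_neg (fun h => hi (by simpa using Fin.ext_iff.mp h))]; ring

lemma pow_mulVec (hp3 : 3 ≤ p) (k : ℕ) (hk : k ≤ p - 2) :
    (gamma1 p) ^ k *ᵥ Pi.single (⟨0, by omega⟩ : Fin (p - 1)) 1 =
      Pi.single (⟨k, by omega⟩ : Fin (p - 1)) 1 := by
  induction k with
  | zero => rw [pow_zero, Matrix.one_mulVec]
  | succ k ih =>
    have hs : gamma1 p ^ (k + 1) = gamma1 p * gamma1 p ^ k := pow_succ' _ _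
    rw [hs, ← Matrix.mulVec_mulVec, ih (by omega)]
    exact mulVec_single_lt hp3 ⟨k, by omega⟩ (by simp only [Fin.val_mk]; omega)

lemma pow_pred_mulVec (hp3 : 3 ≤ p) :
    (gamma1 p) ^ (p - 1) *ᵥ Pi.single (⟨0, by omega⟩ : Fin (p - 1)) 1 =
      fun _ => (-1 : ZMod (p ^ 2)) := by
  have hs : gamma1 p ^ (p - 1) = gamma1 p * gamma1 p ^ (p - 2) := by
    rw [← pow_succ']; congr 1; omega
  rw [hs, ← Matrix.mulVec_mulVec, pow_mulVec hp3 (p - 2) le_rfl,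
    mulVec_single_last hp3 _ rfl]

lemma pow_p_mulVec (hp3 : 3 ≤ p) :
    (gamma1 p) ^ p *ᵥ Pi.single (⟨0, by omega⟩ : Fin (p - 1)) 1 =
      Pi.single (⟨0, by omega⟩ : Fin (p - 1)) 1 := by
  have hs : gamma1 p ^ p = gamma1 p * gamma1 p ^ (p - 1) := by
    rw [← pow_succ']; congr 1; omega
  rw [hs, ← Matrix.mulVec_mulVec, pow_pred_mulVec hp3, mulVec_neg_one hp3]

lemma pow_mulVec_single (hp3 : 3 ≤ p) (j : Fin (p - 1)) :
    (gamma1 p) ^ (j : ℕ) *ᵥ Pi.single (⟨0, by omega⟩ : Fin (p - 1)) 1 =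
      Pi.single j 1 := by
  have := pow_mulVec hp3 (j : ℕ) (by have := j.isLt; omega)
  rwa [show (⟨(j : ℕ), by have := j.isLt; omega⟩ : Fin (p - 1)) = j from Fin.ext rfl] at this

lemma gamma1_pow_p (hp3 : 3 ≤ p) : (gamma1 p) ^ p = 1 := by
  have hcol : ∀ j : Fin (p - 1),
      (gamma1 p) ^ p *ᵥ Pi.single j 1 = Pi.single j 1 := by
    intro j
    rw [← pow_mulVec_single hp3 j, Matrix.mulVec_mulVec, ← pow_add, add_comm, pow_add,
      ← Matrix.mulVec_mulVec, pow_p_mulVec hp3, pow_mulVec_single hp3 j]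
  ext i j
  have h := congrFun (hcol j) i
  rw [Matrix.mulVec_single_one] at h
  simp only [Matrix.col_apply] at h
  rw [h, Matrix.one_apply, Pi.single_apply]

lemma pow_mul_smul_ne_one (hp3 : 3 ≤ p) (k : ℕ) (hk1 : 1 ≤ k) (hk2 : k ≤ p - 1)
    (c : ZMod (p ^ 2)) :
    (gamma1 p) ^ k * (c • 1) ≠ 1 := by
  haveI : Fact (1 < p ^ 2) := ⟨by nlinarith⟩
  intro h
  have h' : ((gamma1 p) ^ k * (c • (1 : Matrix (Fin (p-1)) (Fin (p-1)) (ZMod (p^2)))))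
      *ᵥ Pi.single (⟨0, by omega⟩ : Fin (p - 1)) 1
      = Pi.single (⟨0, by omega⟩ : Fin (p - 1)) 1 := by rw [h, Matrix.one_mulVec]
  rw [← Matrix.mulVec_mulVec, Matrix.smul_mulVec, Matrix.one_mulVec,
    Matrix.mulVec_smul] at h'
  rcases Nat.lt_or_ge k (p - 1) with hlt | hge
  · rw [pow_mulVec hp3 k (by omega)] at h'
    have h0 := congrFun h' ⟨0, by omega⟩
    have h1 := congrFun h' ⟨k, by omega⟩
    rw [Pi.smul_apply, Pi.single_apply, Pi.single_apply, if_neg (by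
      intro hh; have := Fin.ext_iff.mp hh; simp only [Fin.val_mk] at this; omega),
      if_pos rfl] at h0
    rw [Pi.smul_apply, Pi.single_apply, Pi.single_apply, if_pos rfl, if_neg (by
      intro hh; have := Fin.ext_iff.mp hh; simp only [Fin.val_mk] at this; omega)] at h1
    -- h0 : c • 0 = 1, h1 : c • 1 = 0
    rw [smul_zero] at h0
    exact one_ne_zero h0.symm
  · have hk : k = p - 1 := by omega
    subst hk
    rw [pow_pred_mulVec hp3] at h'
    have h0 := congrFun h' ⟨0, by omega⟩
    have h1 := congrFun h' ⟨1, by omega⟩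
    rw [Pi.smul_apply, Pi.single_apply, if_pos rfl] at h0
    rw [Pi.smul_apply, Pi.single_apply, if_neg (by
      intro hh; have := Fin.ext_iff.mp hh; simp only [Fin.val_mk] at this; omega)] at h1
    -- h0 : c • (-1) = 1, h1 : c • (-1) = 0
    rw [h1] at h0
    exact one_ne_zero h0.symm

lemma gamma2_pow_p (hp : p.Prime) : (gamma2 p) ^ p = 1 := by
  have key : ((p : ZMod (p ^ 2)) + 1) ^ p = 1 := by
    have h := dvd_sub_pow_of_dvd_sub (R := ℤ) (p := p) (a := (p : ℤ) + 1) (b := 1)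
      (by simp) 1
    rw [pow_one, one_pow] at h
    have h2 : ((((p : ℤ) + 1) ^ p - 1 : ℤ) : ZMod (p ^ 2)) = 0 := by
      rw [ZMod.intCast_zmod_eq_zero_iff_dvd]
      exact_mod_cast h
    push_cast at h2
    linear_combination h2
  rw [gamma2, smul_pow, key, one_smul, one_pow]

end GammaAux


/-- For an odd prime `p`, the subgroup of `GL_{p-1}(ℤ/p²ℤ)` generated
by `γ1` and `γ2` is isomorphic to `(ℤ/pℤ)²`; in particular `γ1` and `γ2` commute, each
has order `p`, and the subgroup they generate has order `p²`. -/
theorem subgroup_generated_by_gamma1_gamma2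
    (p : ℕ) (hp : p.Prime) (hodd : Odd p)
    (g1 g2 : GL (Fin (p - 1)) (ZMod (p ^ 2)))
    (hg1 : (g1 : Matrix (Fin (p - 1)) (Fin (p - 1)) (ZMod (p ^ 2))) = gamma1 p)
    (hg2 : (g2 : Matrix (Fin (p - 1)) (Fin (p - 1)) (ZMod (p ^ 2))) = gamma2 p) :
    Nonempty ((Subgroup.closure {g1, g2} : Subgroup (GL (Fin (p - 1)) (ZMod (p ^ 2)))) ≃*
        (Multiplicative (ZMod p) × Multiplicative (ZMod p))) ∧
      Commute g1 g2 ∧ orderOf g1 = p ∧ orderOf g2 = p ∧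
      Nat.card (Subgroup.closure {g1, g2} : Subgroup (GL (Fin (p - 1)) (ZMod (p ^ 2)))) =
        p ^ 2 := by
  classical
  haveI hf : Fact p.Prime := ⟨hp⟩
  have hne2 : p ≠ 2 := by rintro rfl; revert hodd; decide
  have hp3 : 3 ≤ p := by have := hp.two_le; omega
  haveI : Fact (1 < p ^ 2) := ⟨by nlinarith⟩
  -- commutation
  have hcomm : Commute g1 g2 := by
    refine Units.ext ?_
    rw [Units.val_mul, Units.val_mul, hg1, hg2, gamma2, Matrix.mul_smul,
      Matrix.smul_mul, mul_one, one_mul]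
  -- g1 ^ p = 1
  have hg1p : g1 ^ p = 1 := Units.ext (by
    rw [Units.val_pow_eq_pow_val, hg1, GammaAux.gamma1_pow_p hp3, Units.val_one])
  have hg2p : g2 ^ p = 1 := Units.ext (by
    rw [Units.val_pow_eq_pow_val, hg2, GammaAux.gamma2_pow_p hp, Units.val_one])
  -- orders
  have hg1ne : g1 ≠ 1 := by
    intro h
    have hmat : gamma1 p = 1 := by rw [← hg1, h, Units.val_one]
    have h2 := congrFun (congrFun hmat ⟨0, by omega⟩) ⟨p - 2, by omega⟩
    rw [Matrix.one_apply_ne (by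
      intro hh; have := Fin.ext_iff.mp hh; simp only [Fin.val_mk] at this; omega)] at h2
    simp only [gamma1, Fin.val_mk, if_pos rfl] at h2
    exact one_ne_zero (neg_eq_zero.mp h2)
  have hpz : (p : ZMod (p ^ 2)) ≠ 0 := by
    rw [Ne, ZMod.natCast_eq_zero_iff]
    intro h
    have := Nat.le_of_dvd (by omega) h
    nlinarith
  have hg2ne : g2 ≠ 1 := by
    intro h
    have hmat : gamma2 p = 1 := by rw [← hg2, h, Units.val_one]
    have h2 := congrFun (congrFun hmat ⟨0, by omega⟩) ⟨0, by omega⟩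
    rw [Matrix.one_apply_eq] at h2
    simp only [gamma2, Matrix.smul_apply, Matrix.one_apply_eq, smul_eq_mul, mul_one] at h2
    exact hpz (by linear_combination h2)
  have hord1 : orderOf g1 = p := by
    rcases hp.eq_one_or_self_of_dvd _ (orderOf_dvd_of_pow_eq_one hg1p) with h | h
    · exact absurd (orderOf_eq_one_iff.mp h) hg1ne
    · exact h
  have hord2 : orderOf g2 = p := by
    rcases hp.eq_one_or_self_of_dvd _ (orderOf_dvd_of_pow_eq_one hg2p) with h | h
    · exact absurd (orderOf_eq_one_iff.mp h) hg2ne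
    · exact h
  -- homomorphisms from ZMod p
  have hlift1 : (zmultiplesHom (Additive (GL (Fin (p - 1)) (ZMod (p ^ 2))))
      (Additive.ofMul g1)) ((p : ℕ) : ℤ) = 0 := by
    rw [zmultiplesHom_apply, ← ofMul_zpow, zpow_natCast, hg1p]; rfl
  have hlift2 : (zmultiplesHom (Additive (GL (Fin (p - 1)) (ZMod (p ^ 2))))
      (Additive.ofMul g2)) ((p : ℕ) : ℤ) = 0 := by
    rw [zmultiplesHom_apply, ← ofMul_zpow, zpow_natCast, hg2p]; rfl
  set f1 : ZMod p →+ Additive (GL (Fin (p - 1)) (ZMod (p ^ 2))) :=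
    ZMod.lift p ⟨_, hlift1⟩ with hf1
  set f2 : ZMod p →+ Additive (GL (Fin (p - 1)) (ZMod (p ^ 2))) :=
    ZMod.lift p ⟨_, hlift2⟩ with hf2
  set φ1 : Multiplicative (ZMod p) →* GL (Fin (p - 1)) (ZMod (p ^ 2)) :=
    AddMonoidHom.toMultiplicativeLeft f1 with hφ1d
  set φ2 : Multiplicative (ZMod p) →* GL (Fin (p - 1)) (ZMod (p ^ 2)) :=
    AddMonoidHom.toMultiplicativeLeft f2 with hφ2d
  have hφ1 : ∀ x : ℤ, φ1 (Multiplicative.ofAdd ((x : ZMod p))) = g1 ^ x := by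
    intro x
    show ((f1 ((x : ZMod p))).toMul) = g1 ^ x
    rw [hf1, ZMod.lift_coe, zmultiplesHom_apply, ← ofMul_zpow]
    rfl
  have hφ2 : ∀ x : ℤ, φ2 (Multiplicative.ofAdd ((x : ZMod p))) = g2 ^ x := by
    intro x
    show ((f2 ((x : ZMod p))).toMul) = g2 ^ x
    rw [hf2, ZMod.lift_coe, zmultiplesHom_apply, ← ofMul_zpow]
    rfl
  have hsurj : ∀ m : Multiplicative (ZMod p),
      ∃ x : ℤ, m = Multiplicative.ofAdd ((x : ZMod p)) := by
    intro m
    obtain ⟨x, hx⟩ := ZMod.intCast_surjective (Multiplicative.toAdd m)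
    exact ⟨x, by rw [hx, ofAdd_toAdd]⟩
  have hcomm' : ∀ m n, Commute (φ1 m) (φ2 n) := by
    intro m n
    obtain ⟨x, hx⟩ := hsurj m
    obtain ⟨y, hy⟩ := hsurj n
    rw [hx, hy, hφ1, hφ2]
    exact hcomm.zpow_zpow x y
  set φ : Multiplicative (ZMod p) × Multiplicative (ZMod p) →*
      GL (Fin (p - 1)) (ZMod (p ^ 2)) :=
    MonoidHom.noncommCoprod φ1 φ2 hcomm' with hφd
  have hφ : ∀ mn, φ mn = φ1 mn.1 * φ2 mn.2 := fun _ => rfl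
  -- range = closure
  have hrange : φ.range = Subgroup.closure {g1, g2} := by
    apply le_antisymm
    · rintro x ⟨⟨m, n⟩, rfl⟩
      rw [hφ]
      have hm1 : g1 ∈ Subgroup.closure {g1, g2} :=
        Subgroup.subset_closure (Set.mem_insert _ _)
      have hm2 : g2 ∈ Subgroup.closure {g1, g2} :=
        Subgroup.subset_closure (Set.mem_insert_of_mem _ rfl)
      obtain ⟨x, hx⟩ := hsurj m
      obtain ⟨y, hy⟩ := hsurj n
      rw [hx, hy, hφ1, hφ2]
      exact mul_mem (zpow_mem hm1 x) (zpow_mem hm2 y)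
    · rw [Subgroup.closure_le]
      intro x hx
      rcases hx with rfl | hx
      · refine ⟨(Multiplicative.ofAdd (((1 : ℤ) : ZMod p)), 1), ?_⟩
        show φ1 (Multiplicative.ofAdd (((1 : ℤ) : ZMod p))) * φ2 1 = x
        rw [hφ1, map_one, mul_one, zpow_one]
      · rcases hx with rfl
        refine ⟨(1, Multiplicative.ofAdd (((1 : ℤ) : ZMod p))), ?_⟩
        show φ1 1 * φ2 (Multiplicative.ofAdd (((1 : ℤ) : ZMod p))) = x
        rw [hφ2, map_one, one_mul, zpow_one]
  -- injectivity
  have hinj : Function.Injective φ := by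
    rw [injective_iff_map_eq_one]
    rintro ⟨m, n⟩ h
    set a := Multiplicative.toAdd m with ha
    set b := Multiplicative.toAdd n with hb
    have hm : m = Multiplicative.ofAdd (((a.val : ℤ) : ZMod p)) := by
      rw [Int.cast_natCast, ZMod.natCast_rightInverse a]
      exact (ofAdd_toAdd m).symm
    have hn : n = Multiplicative.ofAdd (((b.val : ℤ) : ZMod p)) := by
      rw [Int.cast_natCast, ZMod.natCast_rightInverse b]
      exact (ofAdd_toAdd n).symm
    rw [hφ, hm, hn, hφ1, hφ2, zpow_natCast, zpow_natCast] at h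
    have hmat := congrArg Units.val h
    rw [Units.val_mul, Units.val_pow_eq_pow_val, Units.val_pow_eq_pow_val, hg1, hg2,
      Units.val_one, gamma2, smul_pow, one_pow] at hmat
    have hA0 : a.val = 0 := by
      by_contra hA
      exact GammaAux.pow_mul_smul_ne_one hp3 a.val (by omega)
        (by have := ZMod.val_lt a; omega) _ hmat
    rw [hA0, pow_zero, one_mul] at h
    have hB : orderOf g2 ∣ b.val := orderOf_dvd_of_pow_eq_one h
    rw [hord2] at hB
    have hB0 : b.val = 0 := Nat.eq_zero_of_dvd_of_lt hB (ZMod.val_lt b)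
    have hma : m = 1 := by rw [hm, hA0]; norm_num
    have hnb : n = 1 := by rw [hn, hB0]; norm_num
    rw [hma, hnb]; rfl
  -- conclusion
  let e : (Multiplicative (ZMod p) × Multiplicative (ZMod p)) ≃*
      (Subgroup.closure {g1, g2} : Subgroup (GL (Fin (p - 1)) (ZMod (p ^ 2)))) :=
    (MonoidHom.ofInjective hinj).trans (MulEquiv.subgroupCongr hrange)
  refine ⟨⟨e.symm⟩, hcomm, hord1, hord2, ?_⟩
  have hcard := Nat.card_congr e.toEquiv
  rw [← hcard, Nat.card_prod, Nat.card_congr (Multiplicative.toAdd (α := ZMod p)),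
    Nat.card_zmod, sq]
end

section
/- Let p be an odd prime and let G_p be the subgroup of GL_{p−1}(ℤ/p²ℤ) generated by γ1 and γ2. There exists a unique 1-cocycle Z : G_p → (ℤ/p²ℤ)^{p−1} (for the action of G_p by matrix-vector multiplication) with Z(γ1) = v1 and Z(γ2) = v2. -/
/-- The vector `v1 = (p-1, 0, …, 0, 1)ᵀ ∈ (ℤ/p²ℤ)^{p-1}`. -/
def v1 (p : ℕ) : Fin (p - 1) → ZMod (p ^ 2) :=
  fun i => if (i : ℕ) = 0 then (p : ZMod (p ^ 2)) - 1
    else if (i : ℕ) = p - 2 then 1 else 0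

/-- The vector `v2 = (p, p, …, p, 0)ᵀ ∈ (ℤ/p²ℤ)^{p-1}`. -/
def v2 (p : ℕ) : Fin (p - 1) → ZMod (p ^ 2) :=
  fun i => if (i : ℕ) = p - 2 then 0 else (p : ZMod (p ^ 2))


lemma ppsq (p : ℕ) : (p : ZMod (p ^ 2)) * p = 0 := by
  have h : ((p ^ 2 : ℕ) : ZMod (p ^ 2)) = 0 := ZMod.natCast_self _
  push_cast at h
  linear_combination h


lemma gamma1_mulVec {p : ℕ} (hp3 : 3 ≤ p) (w : Fin (p - 1) → ZMod (p ^ 2)) (i : Fin (p - 1)) :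
    (gamma1 p).mulVec w i =
      (if h : 0 < (i : ℕ) then w ⟨(i : ℕ) - 1, lt_of_le_of_lt (Nat.sub_le _ _) i.2⟩ else 0)
        - w ⟨p - 2, by omega⟩ := by
  have hL : p - 2 < p - 1 := by omega
  have key : ∀ j : Fin (p - 1),
      (if (j : ℕ) = p - 2 then (-1 : ZMod (p ^ 2)) else if (i : ℕ) = (j : ℕ) + 1 then 1 else 0) * w j
      = (if j = (⟨p - 2, hL⟩ : Fin (p - 1)) then -w j else 0)
        + (if ((i : ℕ) = (j : ℕ) + 1 ∧ j ≠ (⟨p - 2, hL⟩ : Fin (p - 1))) then w j else 0) := by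
    intro j
    by_cases hj : (j : ℕ) = p - 2
    · have hjL : j = (⟨p - 2, hL⟩ : Fin (p - 1)) := Fin.ext hj
      have hi : ¬ ((i : ℕ) = (j : ℕ) + 1) := by
        have := i.2; omega
      simp [hjL, hj, hi]
    · have hjL : j ≠ (⟨p - 2, hL⟩ : Fin (p - 1)) := by
        intro h; exact hj (by simpa using congrArg Fin.val h)
      by_cases hi : (i : ℕ) = (j : ℕ) + 1 <;> simp [hj, hjL, hi]
  have expand : (gamma1 p).mulVec w i = ∑ j : Fin (p - 1), (if (j : ℕ) = p - 2
      then (-1 : ZMod (p ^ 2))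
      else if (i : ℕ) = (j : ℕ) + 1 then 1 else 0) * w j := rfl
  rw [expand, Finset.sum_congr rfl (fun j _ => key j), Finset.sum_add_distrib]
  by_cases h0 : 0 < (i : ℕ)
  · have hcond : ∀ j : Fin (p - 1),
        ((i : ℕ) = (j : ℕ) + 1 ∧ j ≠ (⟨p - 2, hL⟩ : Fin (p - 1)))
        = (j = (⟨(i : ℕ) - 1, lt_of_le_of_lt (Nat.sub_le _ _) i.2⟩ : Fin (p - 1))) := by
      intro j
      have hi2 := i.2
      apply propext
      constructor
      · rintro ⟨h1, -⟩; apply Fin.ext; show (j : ℕ) = (i : ℕ) - 1; omega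
      · intro h
        have hv : (j : ℕ) = (i : ℕ) - 1 := by simpa using congrArg Fin.val h
        constructor
        · omega
        · intro hL2
          have : (j : ℕ) = p - 2 := by simpa using congrArg Fin.val hL2
          omega
    simp only [hcond]
    rw [Finset.sum_ite_eq' Finset.univ, Finset.sum_ite_eq' Finset.univ]
    simp [h0]
    ring
  · have : (i : ℕ) = 0 := by omega
    simp only [this]
    rw [Finset.sum_ite_eq' Finset.univ]
    simp [h0]


def uvec (p : ℕ) : Fin (p - 1) → ZMod (p ^ 2) :=
  fun i => if (i : ℕ) = p - 2 then -1 else ((i : ℕ) : ZMod (p ^ 2)) + 2 - p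

def tvec (p : ℕ) : Fin (p - 1) → ZMod (p ^ 2) :=
  fun i => ((i : ℕ) : ZMod (p ^ 2)) + 1

section apply
variable {p : ℕ}

lemma uvec_eq_neg_one {i : Fin (p - 1)} (h : (i : ℕ) = p - 2) : uvec p i = -1 := if_pos h
lemma uvec_eq {i : Fin (p - 1)} (h : ¬ (i : ℕ) = p - 2) :
    uvec p i = ((i : ℕ) : ZMod (p ^ 2)) + 2 - p := if_neg h
lemma uvec_mk_eq (x : ℕ) (hx : x < p - 1) (h : ¬ x = p - 2) :
    uvec p ⟨x, hx⟩ = (x : ZMod (p ^ 2)) + 2 - p := if_neg h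
lemma uvec_mk_last (x : ℕ) (hx : x < p - 1) (h : x = p - 2) :
    uvec p ⟨x, hx⟩ = -1 := if_pos h
lemma v1_zero {i : Fin (p - 1)} (h : (i : ℕ) = 0) : v1 p i = (p : ZMod (p ^ 2)) - 1 := if_pos h
lemma v1_last {i : Fin (p - 1)} (h0 : ¬ (i : ℕ) = 0) (h : (i : ℕ) = p - 2) : v1 p i = 1 := by
  rw [v1]; rw [if_neg h0, if_pos h]
lemma v1_mid {i : Fin (p - 1)} (h0 : ¬ (i : ℕ) = 0) (h : ¬ (i : ℕ) = p - 2) : v1 p i = 0 := by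
  rw [v1]; rw [if_neg h0, if_neg h]
lemma tvec_eq (i : Fin (p - 1)) : tvec p i = ((i : ℕ) : ZMod (p ^ 2)) + 1 := rfl
lemma tvec_mk (x : ℕ) (hx : x < p - 1) : tvec p ⟨x, hx⟩ = (x : ZMod (p ^ 2)) + 1 := rfl
lemma hcastp {k : ℕ} (hk : k ≤ p) : ((p - k : ℕ) : ZMod (p ^ 2)) = (p : ZMod (p ^ 2)) - k := by
  push_cast [Nat.cast_sub hk]; ring

end apply

lemma gamma1_mulVec_u {p : ℕ} (hp3 : 3 ≤ p) :
    (gamma1 p).mulVec (uvec p) = uvec p + v1 p := by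
  funext i
  rw [Pi.add_apply, gamma1_mulVec hp3]
  have hi2 := i.2
  by_cases h0 : (i : ℕ) = 0
  · rw [dif_neg (by omega), uvec_mk_last _ _ rfl, uvec_eq (by omega), v1_zero h0, h0]
    push_cast
    ring
  · by_cases hL : (i : ℕ) = p - 2
    · rw [dif_pos (by omega), uvec_mk_eq _ _ (by omega), uvec_mk_last _ _ rfl,
        uvec_eq_neg_one hL, v1_last h0 hL, show (i : ℕ) - 1 = p - 3 from by omega,
        hcastp (show 3 ≤ p from hp3)]
      push_cast
      ring
    · rw [dif_pos (by omega), uvec_mk_eq _ _ (by omega), uvec_mk_last _ _ rfl,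
        uvec_eq hL, v1_mid h0 hL, Nat.cast_sub (by omega : 1 ≤ (i : ℕ))]
      push_cast
      ring

lemma gamma1_mulVec_t {p : ℕ} (hp3 : 3 ≤ p) :
    (gamma1 p).mulVec (tvec p) = tvec p + (p : ZMod (p ^ 2)) • (fun _ => (-1 : ZMod (p ^ 2))) := by
  funext i
  rw [Pi.add_apply, Pi.smul_apply, smul_eq_mul, gamma1_mulVec hp3]
  have hi2 := i.2
  by_cases h0 : 0 < (i : ℕ)
  · rw [dif_pos h0, tvec_mk, tvec_mk, tvec_eq, Nat.cast_sub (by omega : 1 ≤ (i : ℕ)),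
      hcastp (by omega : 2 ≤ p)]
    push_cast
    ring
  · rw [dif_neg h0, tvec_mk, hcastp (by omega : 2 ≤ p), tvec_eq,
      show (i : ℕ) = 0 from by omega]
    push_cast
    ring

lemma gamma2_mulVec {p : ℕ} (w : Fin (p - 1) → ZMod (p ^ 2)) :
    (gamma2 p).mulVec w = w + (p : ZMod (p ^ 2)) • w := by
  funext i
  rw [gamma2, Matrix.smul_mulVec, Matrix.one_mulVec]
  simp [smul_eq_mul]
  ring

lemma one_add_p_pow {p : ℕ} (k : ℕ) :
    ((p : ZMod (p ^ 2)) + 1) ^ k = 1 + (k : ZMod (p ^ 2)) * p := by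
  induction k with
  | zero => simp
  | succ n ih =>
    push_cast
    linear_combination ((p : ZMod (p ^ 2)) + 1) * ih + (n : ZMod (p ^ 2)) * ppsq p

lemma det_gamma2 {p : ℕ} (hp3 : 3 ≤ p) :
    (gamma2 p).det = 1 - (p : ZMod (p ^ 2)) := by
  rw [gamma2, Matrix.det_smul, Matrix.det_one, Fintype.card_fin, one_add_p_pow,
    Nat.cast_sub (by omega : 1 ≤ p)]
  push_cast
  linear_combination ppsq p

lemma det_gamma1 {p : ℕ} (hp3 : 3 ≤ p) (hodd : Odd p) : (gamma1 p).det = 1 := by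
  obtain ⟨n, hn⟩ : ∃ n, p - 1 = n + 1 := ⟨p - 2, by omega⟩
  set R := ZMod (p ^ 2)
  set U : Matrix (Fin (p - 1)) (Fin (p - 1)) R :=
    (fun i j => if (j : ℕ) = p - 2 then -1 else if i = j then 1 else 0) with hU
  set c : Equiv.Perm (Fin (p - 1)) := (finCongr hn).symm.permCongr (finRotate (n + 1)) with hc
  have hcval : ∀ j : Fin (p - 1), ((c j : ℕ)) = ((j : ℕ) + 1) % (p - 1) := by
    intro j
    simp [hc, Equiv.permCongr_apply, finRotate_succ_apply, Fin.add_def, hn]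
  have hfact : gamma1 p = (c⁻¹.permMatrix R) * U := by
    ext i j
    rw [Matrix.mul_apply]
    have key : ∀ k : Fin (p - 1), (c⁻¹.permMatrix R) i k * U k j
        = if k = c⁻¹ i then U k j else 0 := by
      intro k
      rw [Equiv.Perm.permMatrix, PEquiv.toMatrix_apply, Equiv.toPEquiv_apply]
      by_cases h : c⁻¹ i = k
      · simp [h]
      · have h' : ¬ c.symm i = k := h
        simp [h', Ne.symm h']
    rw [Finset.sum_congr rfl (fun k _ => key k), Finset.sum_ite_eq' Finset.univ]
    simp only [Finset.mem_univ, if_true]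
    by_cases hj : (j : ℕ) = p - 2
    · simp [gamma1, hU, hj]
    · have hiff : (c⁻¹ i = j) ↔ ((i : ℕ) = (j : ℕ) + 1) := by
        rw [Equiv.Perm.inv_eq_iff_eq, eq_comm, Fin.ext_iff, hcval j,
          Nat.mod_eq_of_lt (by have := j.2; omega)]
        omega
      have hiff' : (c.symm i = j) ↔ ((i : ℕ) = (j : ℕ) + 1) := hiff
      simp [gamma1, hU, hj, hiff']
  have hUtri : U.BlockTriangular id := by
    intro i j hij
    have h1 : ¬ (j : ℕ) = p - 2 := by
      have := i.2
      have : (j : ℕ) < (i : ℕ) := hij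
      omega
    have h2 : ¬ i = j := by
      intro h; subst h; exact absurd rfl (ne_of_gt hij)
    simp [hU, h1, h2]
  have hdetU : U.det = -1 := by
    rw [Matrix.det_of_upperTriangular hUtri]
    have : ∀ i : Fin (p - 1), U i i = if i = (⟨p - 2, by omega⟩ : Fin (p - 1)) then -1 else 1 := by
      intro i
      by_cases h : i = (⟨p - 2, by omega⟩ : Fin (p - 1))
      · have hv : (i : ℕ) = p - 2 := by rw [h]
        simp [hU, h, hv]
      · have hv : ¬ (i : ℕ) = p - 2 := fun hh => h (Fin.ext hh)
        simp [hU, h, hv]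
    rw [Finset.prod_congr rfl (fun i _ => this i), Finset.prod_ite_eq' Finset.univ]
    simp
  have hsign : Equiv.Perm.sign c⁻¹ = -1 := by
    rw [Equiv.Perm.sign_inv, hc, Equiv.Perm.sign_permCongr, sign_finRotate]
    obtain ⟨m, hm⟩ := hodd
    exact Odd.neg_one_pow ⟨m - 1, by omega⟩
  rw [hfact, Matrix.det_mul, Matrix.det_permutation, hsign, hdetU]
  simp

def Zcand (p : ℕ) (x : GL (Fin (p - 1)) (ZMod (p ^ 2))) : Fin (p - 1) → ZMod (p ^ 2) :=
  (x : Matrix (Fin (p - 1)) (Fin (p - 1)) (ZMod (p ^ 2))).mulVec (uvec p) - uvec p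
    + (((x : Matrix (Fin (p - 1)) (Fin (p - 1)) (ZMod (p ^ 2))).det - 1)) • tvec p

/-- Let `p` be an odd prime and `G_p` the subgroup of
`GL_{p-1}(ℤ/p²ℤ)` generated by `γ1` and `γ2`. There is a unique 1-cocycle
`Z : G_p → (ℤ/p²ℤ)^{p-1}` (for the action of `G_p` by matrix-vector multiplication)
with `Z γ1 = v1` and `Z γ2 = v2`. -/
theorem exists_unique_cocycle_with_values_v1_v2
    (p : ℕ) (hp : p.Prime) (hodd : Odd p)
    (g1 g2 : GL (Fin (p - 1)) (ZMod (p ^ 2)))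
    (hg1 : (g1 : Matrix (Fin (p - 1)) (Fin (p - 1)) (ZMod (p ^ 2))) = gamma1 p)
    (hg2 : (g2 : Matrix (Fin (p - 1)) (Fin (p - 1)) (ZMod (p ^ 2))) = gamma2 p) :
    ∃! Z : (Subgroup.closure {g1, g2} : Subgroup (GL (Fin (p - 1)) (ZMod (p ^ 2)))) →
        (Fin (p - 1) → ZMod (p ^ 2)),
      (∀ a b : (Subgroup.closure {g1, g2} : Subgroup (GL (Fin (p - 1)) (ZMod (p ^ 2)))),
          Z (a * b) = Z a +
            ((a : GL (Fin (p - 1)) (ZMod (p ^ 2))) :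
              Matrix (Fin (p - 1)) (Fin (p - 1)) (ZMod (p ^ 2))).mulVec (Z b)) ∧
      Z ⟨g1, Subgroup.subset_closure (by simp)⟩ = v1 p ∧
      Z ⟨g2, Subgroup.subset_closure (by simp)⟩ = v2 p := by
  have hp3 : 3 ≤ p := by
    have h2 := hp.two_le
    rcases hodd with ⟨m, hm⟩
    omega
  -- the property preserved by the group
  have Qall : ∀ g ∈ (Subgroup.closure {g1, g2} : Subgroup (GL (Fin (p - 1)) (ZMod (p ^ 2)))),
      (∃ c, ((g : Matrix (Fin (p - 1)) (Fin (p - 1)) (ZMod (p ^ 2))).det = 1 + p * c)) ∧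
      (∃ w, (g : Matrix (Fin (p - 1)) (Fin (p - 1)) (ZMod (p ^ 2))).mulVec (tvec p)
          = tvec p + (p : ZMod (p ^ 2)) • w) := by
    intro g hg
    induction hg using Subgroup.closure_induction with
    | mem x hx =>
      rcases hx with rfl | hx
      · exact ⟨⟨0, by rw [hg1, det_gamma1 hp3 hodd]; ring⟩,
          ⟨fun _ => -1, by rw [hg1, gamma1_mulVec_t hp3]⟩⟩
      · rw [Set.mem_singleton_iff] at hx
        subst hx
        exact ⟨⟨-1, by rw [hg2, det_gamma2 hp3]; ring⟩,
          ⟨tvec p, by rw [hg2, gamma2_mulVec]⟩⟩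
    | one =>
      exact ⟨⟨0, by simp⟩, ⟨0, by simp [Matrix.one_mulVec]⟩⟩
    | mul x y hx hy ihx ihy =>
      obtain ⟨⟨ca, hca⟩, ⟨wa, hwa⟩⟩ := ihx
      obtain ⟨⟨cb, hcb⟩, ⟨wb, hwb⟩⟩ := ihy
      constructor
      · refine ⟨ca + cb + p * ca * cb, ?_⟩
        rw [Units.val_mul, Matrix.det_mul, hca, hcb]; ring
      · refine ⟨wa + (x : Matrix (Fin (p - 1)) (Fin (p - 1)) (ZMod (p ^ 2))).mulVec wb, ?_⟩
        rw [Units.val_mul, ← Matrix.mulVec_mulVec, hwb, Matrix.mulVec_add,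
          Matrix.mulVec_smul, hwa, smul_add]
        abel
    | inv x hx ihx =>
      obtain ⟨⟨ca, hca⟩, ⟨wa, hwa⟩⟩ := ihx
      have hBA : ((x⁻¹ : GL (Fin (p - 1)) (ZMod (p ^ 2))) : Matrix (Fin (p - 1)) (Fin (p - 1)) (ZMod (p ^ 2)))
          * (x : Matrix (Fin (p - 1)) (Fin (p - 1)) (ZMod (p ^ 2))) = 1 := by
        rw [← Units.val_mul, inv_mul_cancel, Units.val_one]
      constructor
      · refine ⟨-ca, ?_⟩
        have h1 : ((x⁻¹ : GL (Fin (p - 1)) (ZMod (p ^ 2))) : Matrix (Fin (p - 1)) (Fin (p - 1)) (ZMod (p ^ 2))).det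
            * (x : Matrix (Fin (p - 1)) (Fin (p - 1)) (ZMod (p ^ 2))).det = 1 := by
          rw [← Matrix.det_mul, hBA, Matrix.det_one]
        rw [hca] at h1
        linear_combination (1 - (p : ZMod (p ^ 2)) * ca) * h1
          + (((x⁻¹ : GL (Fin (p - 1)) (ZMod (p ^ 2))) : Matrix (Fin (p - 1)) (Fin (p - 1)) (ZMod (p ^ 2))).det * ca ^ 2) * ppsq p
      · refine ⟨-(((x⁻¹ : GL (Fin (p - 1)) (ZMod (p ^ 2))) : Matrix (Fin (p - 1)) (Fin (p - 1)) (ZMod (p ^ 2))).mulVec wa), ?_⟩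
        have e : ((x⁻¹ : GL (Fin (p - 1)) (ZMod (p ^ 2))) : Matrix (Fin (p - 1)) (Fin (p - 1)) (ZMod (p ^ 2))).mulVec
            ((x : Matrix (Fin (p - 1)) (Fin (p - 1)) (ZMod (p ^ 2))).mulVec (tvec p)) = tvec p := by
          rw [Matrix.mulVec_mulVec, hBA, Matrix.one_mulVec]
        rw [hwa, Matrix.mulVec_add, Matrix.mulVec_smul] at e
        rw [smul_neg]
        rw [← sub_eq_add_neg]
        exact eq_sub_of_add_eq e
  have hco : ∀ a b : (Subgroup.closure {g1, g2} : Subgroup (GL (Fin (p - 1)) (ZMod (p ^ 2)))),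
      Zcand p ↑(a * b) = Zcand p ↑a +
        ((a : GL (Fin (p - 1)) (ZMod (p ^ 2))) :
          Matrix (Fin (p - 1)) (Fin (p - 1)) (ZMod (p ^ 2))).mulVec (Zcand p ↑b) := by
    intro a b
    obtain ⟨⟨ca, hca⟩, wa, hwa⟩ := Qall ↑a a.2
    obtain ⟨⟨cb, hcb⟩, wb, hwb⟩ := Qall ↑b b.2
    rw [Zcand, Zcand, Zcand, Subgroup.coe_mul, Units.val_mul, Matrix.det_mul,
      ← Matrix.mulVec_mulVec, Matrix.mulVec_add, Matrix.mulVec_sub,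
      Matrix.mulVec_smul, hwa]
    funext i
    simp only [Pi.add_apply, Pi.sub_apply, Pi.smul_apply, smul_eq_mul]
    rw [hca, hcb]
    linear_combination (cb * tvec p i * ca - cb * wa i) * ppsq p
  have hval1 : Zcand p g1 = v1 p := by
    rw [Zcand, hg1, gamma1_mulVec_u hp3, det_gamma1 hp3 hodd]
    simp
  have hval2 : Zcand p g2 = v2 p := by
    rw [Zcand, hg2, gamma2_mulVec, det_gamma2 hp3]
    funext i
    simp only [Pi.add_apply, Pi.sub_apply, Pi.smul_apply, smul_eq_mul]
    by_cases hi : (i : ℕ) = p - 2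
    · rw [uvec_eq_neg_one hi, tvec_eq, hi, hcastp (by omega : 2 ≤ p),
        show v2 p i = 0 from if_pos hi]
      linear_combination (-1 : ZMod (p ^ 2)) * ppsq p
    · rw [uvec_eq hi, tvec_eq, show v2 p i = (p : ZMod (p ^ 2)) from if_neg hi]
      linear_combination -ppsq p
  have uniq : ∀ Z W : (Subgroup.closure {g1, g2} : Subgroup (GL (Fin (p - 1)) (ZMod (p ^ 2)))) →
        (Fin (p - 1) → ZMod (p ^ 2)),
      (∀ a b, Z (a * b) = Z a +
        ((a : GL (Fin (p - 1)) (ZMod (p ^ 2))) :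
          Matrix (Fin (p - 1)) (Fin (p - 1)) (ZMod (p ^ 2))).mulVec (Z b)) →
      (∀ a b, W (a * b) = W a +
        ((a : GL (Fin (p - 1)) (ZMod (p ^ 2))) :
          Matrix (Fin (p - 1)) (Fin (p - 1)) (ZMod (p ^ 2))).mulVec (W b)) →
      Z ⟨g1, Subgroup.subset_closure (by simp)⟩ = W ⟨g1, Subgroup.subset_closure (by simp)⟩ →
      Z ⟨g2, Subgroup.subset_closure (by simp)⟩ = W ⟨g2, Subgroup.subset_closure (by simp)⟩ →
      Z = W := by
    intro Z W hZ hW h1 h2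
    have hone : ∀ (V : (Subgroup.closure {g1, g2} : Subgroup (GL (Fin (p - 1)) (ZMod (p ^ 2)))) →
          (Fin (p - 1) → ZMod (p ^ 2))),
        (∀ a b, V (a * b) = V a +
          ((a : GL (Fin (p - 1)) (ZMod (p ^ 2))) :
            Matrix (Fin (p - 1)) (Fin (p - 1)) (ZMod (p ^ 2))).mulVec (V b)) → V 1 = 0 := by
      intro V hV
      have h := hV 1 1
      rw [mul_one, OneMemClass.coe_one, Units.val_one, Matrix.one_mulVec] at h
      have h' : V 1 + V 1 - V 1 = V 1 - V 1 := by rw [← h]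
      simpa using h'
    have hinv : ∀ (V : (Subgroup.closure {g1, g2} : Subgroup (GL (Fin (p - 1)) (ZMod (p ^ 2)))) →
          (Fin (p - 1) → ZMod (p ^ 2))),
        (∀ a b, V (a * b) = V a +
          ((a : GL (Fin (p - 1)) (ZMod (p ^ 2))) :
            Matrix (Fin (p - 1)) (Fin (p - 1)) (ZMod (p ^ 2))).mulVec (V b)) →
        ∀ a, V a⁻¹ = -(((a⁻¹ : GL (Fin (p - 1)) (ZMod (p ^ 2))) :
            Matrix (Fin (p - 1)) (Fin (p - 1)) (ZMod (p ^ 2))).mulVec (V a)) := by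
      intro V hV a
      have h := hV a⁻¹ a
      rw [inv_mul_cancel, hone V hV] at h
      have h' : V a⁻¹ = 0 - ((a⁻¹ : GL (Fin (p - 1)) (ZMod (p ^ 2))) :
          Matrix (Fin (p - 1)) (Fin (p - 1)) (ZMod (p ^ 2))).mulVec (V a) :=
        eq_sub_of_add_eq h.symm
      simpa using h'
    funext x
    obtain ⟨g, hg⟩ := x
    induction hg using Subgroup.closure_induction with
    | mem y hy =>
      rcases hy with rfl | hy
      · exact h1
      · rw [Set.mem_singleton_iff] at hy; subst hy; exact h2
    | one =>
      rw [show (⟨1, Subgroup.one_mem _⟩ : (Subgroup.closure {g1, g2} :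
          Subgroup (GL (Fin (p - 1)) (ZMod (p ^ 2))))) = 1 from rfl, hone Z hZ, hone W hW]
    | mul y z hy hz ihy ihz =>
      have hyz : (⟨y * z, Subgroup.mul_mem _ hy hz⟩ : (Subgroup.closure {g1, g2} :
          Subgroup (GL (Fin (p - 1)) (ZMod (p ^ 2))))) = ⟨y, hy⟩ * ⟨z, hz⟩ := rfl
      rw [hyz, hZ ⟨y, hy⟩ ⟨z, hz⟩, hW ⟨y, hy⟩ ⟨z, hz⟩, ihy, ihz]
    | inv y hy ihy =>
      have hyi : (⟨y⁻¹, Subgroup.inv_mem _ hy⟩ : (Subgroup.closure {g1, g2} :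
          Subgroup (GL (Fin (p - 1)) (ZMod (p ^ 2))))) = (⟨y, hy⟩ : (Subgroup.closure {g1, g2} :
          Subgroup (GL (Fin (p - 1)) (ZMod (p ^ 2)))))⁻¹ := rfl
      rw [hyi, hinv Z hZ ⟨y, hy⟩, hinv W hW ⟨y, hy⟩, ihy]
  refine ⟨fun x => Zcand p ↑x, ⟨hco, hval1, hval2⟩, ?_⟩
  rintro W ⟨hWco, hW1, hW2⟩
  exact uniq W (fun x => Zcand p ↑x) hWco hco (hW1.trans hval1.symm) (hW2.trans hval2.symm)
end

section
/- Let p be an odd prime. There is no vector w ∈ (ℤ/p²ℤ)^{p−1} such that (γ1 − 1)·w = v1 and (γ2 − 1)·w = v2. -/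
/-- For an odd prime `p`, there is no vector `w ∈ (ℤ/p²ℤ)^{p-1}`
such that `(γ1 - 1)·w = v1` and `(γ2 - 1)·w = v2`. -/
theorem cocycle_v1_v2_is_not_a_coboundary
    (p : ℕ) (hp : p.Prime) (hodd : Odd p) :
    ¬ ∃ w : Fin (p - 1) → ZMod (p ^ 2),
        (gamma1 p - 1).mulVec w = v1 p ∧ (gamma2 p - 1).mulVec w = v2 p := by
  rintro ⟨w, h1, h2⟩
  have hp2 : p ≠ 2 := by rintro rfl; exact (by decide : ¬ Odd 2) hodd
  have hp3 : 3 ≤ p := by have := hp.two_le; omega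
  have hL : p - 2 < p - 1 := by omega
  set iL : Fin (p - 1) := ⟨p - 2, hL⟩ with hiL
  -- Step A : p * w iL = 0
  have hg2 : gamma2 p - 1 = (p : ZMod (p ^ 2)) • (1 : Matrix (Fin (p-1)) (Fin (p-1)) (ZMod (p^2))) := by
    unfold gamma2
    rw [add_smul, one_smul]
    abel
  have hA : (p : ZMod (p ^ 2)) * w iL = 0 := by
    have h := congrFun h2 iL
    rw [hg2, Matrix.smul_mulVec, Matrix.one_mulVec] at h
    have : v2 p iL = 0 := by simp [v2, hiL]
    simpa [this] using h
  -- Step B : sum of v1 is p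
  have i0 : Fin (p - 1) := ⟨0, by omega⟩
  have hsum1 : ∑ i, v1 p i = (p : ZMod (p ^ 2)) := by
    have hv : v1 p = fun i => (if i = (⟨0, by omega⟩ : Fin (p-1)) then ((p : ZMod (p^2)) - 1) else 0)
        + (if i = iL then 1 else 0) := by
      funext i
      simp only [v1, Fin.ext_iff, hiL]
      split_ifs <;> simp_all <;> omega
    rw [hv, Finset.sum_add_distrib, Finset.sum_ite_eq' Finset.univ, Finset.sum_ite_eq' Finset.univ]
    simp
  -- column sums of gamma1 - 1
  have hcol : ∀ j : Fin (p - 1), ∑ i, (gamma1 p - 1) i j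
      = if j = iL then -(p : ZMod (p ^ 2)) else 0 := by
    intro j
    have hone : ∑ i, (1 : Matrix (Fin (p-1)) (Fin (p-1)) (ZMod (p^2))) i j = 1 := by
      simp [Matrix.one_apply, Finset.sum_ite_eq' Finset.univ]
    by_cases hj : (j : ℕ) = p - 2
    · have hjL : j = iL := by simp [hiL, Fin.ext_iff, hj]
      have hg : ∀ i : Fin (p-1), gamma1 p i j = -1 := by intro i; simp [gamma1, hj]
      rw [if_pos hjL]
      simp only [Matrix.sub_apply, Finset.sum_sub_distrib, hone]
      rw [Finset.sum_congr rfl (fun i _ => hg i), Finset.sum_const]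
      simp only [Finset.card_univ, Fintype.card_fin, nsmul_eq_mul]
      have : ((p - 1 : ℕ) : ZMod (p ^ 2)) = (p : ZMod (p^2)) - 1 := by
        have : (1 : ℕ) ≤ p := by omega
        push_cast [Nat.cast_sub this]
        ring
      rw [this]; ring
    · have hjL : j ≠ iL := by simp [hiL, Fin.ext_iff]; omega
      have hjlt : (j : ℕ) + 1 < p - 1 := by have := j.2; omega
      have hg : ∀ i : Fin (p-1), gamma1 p i j
          = if i = (⟨(j : ℕ) + 1, hjlt⟩ : Fin (p-1)) then 1 else 0 := by
        intro i; simp [gamma1, hj, Fin.ext_iff]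
      rw [if_neg hjL]
      simp only [Matrix.sub_apply, Finset.sum_sub_distrib, hone]
      rw [Finset.sum_congr rfl (fun i _ => hg i), Finset.sum_ite_eq' Finset.univ]
      simp
  -- Step C : sum of (gamma1 - 1) * w
  have hsum2 : ∑ i, ((gamma1 p - 1).mulVec w) i = -((p : ZMod (p ^ 2)) * w iL) := by
    simp only [Matrix.mulVec, dotProduct]
    rw [Finset.sum_comm]
    have : ∀ j : Fin (p-1), ∑ i, (gamma1 p - 1) i j * w j = (∑ i, (gamma1 p - 1) i j) * w j := by
      intro j; rw [Finset.sum_mul]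
    rw [Finset.sum_congr rfl (fun j _ => this j)]
    rw [Finset.sum_congr rfl (fun j _ => by rw [hcol j])]
    simp only [ite_mul, zero_mul]
    rw [Finset.sum_ite_eq' Finset.univ]
    simp [neg_mul]
  have hfinal : (p : ZMod (p ^ 2)) = 0 := by
    have := congrArg (fun v => ∑ i, v i) h1
    rw [hsum2, hsum1, hA] at this
    simpa using this.symm
  have : NeZero (p ^ 2) := ⟨by positivity⟩
  rw [ZMod.natCast_eq_zero_iff] at hfinal
  have := Nat.le_of_dvd (by omega) hfinal
  nlinarith
end

section
/- Let p be an odd prime. For every h ∈ {0, 1, …, p−1}, the vector v1 + γ1·(1 + γ2 + ⋯ + γ2^{h−1})·v2 lies in the image of the linear map given by multiplication by γ1·γ2^h − 1 on (ℤ/p²ℤ)^{p−1}, and the vector v2 lies in the image of the linear map given by multiplication by γ2 − 1 on (ℤ/p²ℤ)^{p−1}. -/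
/-! The matrix `γ2 = (1 + p)·Id` fixes the multiples of `p` and `γ2 ^ h = (1 + h p)·Id`, so the
first claim asks to solve `((1 + h p) γ1 - 1) w = v1 + h γ1 v2`. As `γ1` shifts coordinates
and subtracts the last one, this is a first-order recursion in the coordinates of `w` once the last
coordinate is fixed; with last coordinate `-1` it is solved by `wᵢ = i + 2 - p + h p (i+2).choose 2`,
and the final equation holds because `(p - 1).choose 2 ≡ 1 (mod p)` for odd `p`. For the second
claim, `v2 = p u` and `γ2 - 1 = p·Id`. -/

open Matrix Finset

theorem ZMod.natCast_mul_self_eq_zero (n : ℕ) : (n : ZMod (n ^ 2)) * n = 0 := by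
  rw [← Nat.cast_mul, ← sq, ZMod.natCast_self]

theorem one_add_pow_of_mul_self_eq_zero {R : Type*} [CommRing R] {x : R} (hx : x * x = 0)
    (k : ℕ) : (1 + x) ^ k = 1 + k * x := by
  induction k with
  | zero => simp
  | succ k ih =>
    rw [pow_succ, ih]
    push_cast
    linear_combination (k : R) * hx

theorem ZMod.natCast_mul_choose_pred_two {p : ℕ} (hodd : Odd p) :
    (p : ZMod (p ^ 2)) * ((p - 1).choose 2 : ℕ) = p := by
  obtain rfl | hp := eq_or_ne p 1
  · decide
  obtain ⟨n, rfl⟩ := Nat.exists_eq_add_of_le' (show 2 ≤ p by have := hodd.pos; omega)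
  have h2 : IsUnit (2 : ZMod ((n + 2) ^ 2)) := by
    have := (ZMod.isUnit_iff_coprime 2 ((n + 2) ^ 2)).2
      (Nat.Coprime.pow_right 2 (Nat.coprime_two_left.2 hodd))
    exact_mod_cast this
  have hchoose : ((n + 1).choose 2 * 2 : ℕ) = (n + 1) * n := by
    rw [← Nat.add_one_mul_choose_eq, Nat.choose_one_right]
  refine h2.mul_left_cancel ?_
  have hsq := ZMod.natCast_mul_self_eq_zero (n + 2)
  have := congrArg (Nat.cast : ℕ → ZMod ((n + 2) ^ 2)) hchoose
  push_cast at this hsq ⊢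
  linear_combination (n + 2 : ZMod ((n + 2) ^ 2)) * this + (n - 1 : ZMod ((n + 2) ^ 2)) * hsq

section gamma1

variable {p : ℕ} (w : Fin (p - 1) → ZMod (p ^ 2))

theorem gamma1_mulVec_zero (hp : 0 < p - 1) :
    (gamma1 p *ᵥ w) ⟨0, hp⟩ = -w ⟨p - 2, by omega⟩ := by
  rw [mulVec, dotProduct, Finset.sum_eq_single ⟨p - 2, by omega⟩]
  · simp [gamma1]
  · intro j _ hj
    have hj' : (j : ℕ) ≠ p - 2 := fun h => hj (Fin.ext h)
    simp [gamma1, hj']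
  · simp

theorem gamma1_mulVec_succ (i : ℕ) (hi : i + 1 < p - 1) :
    (gamma1 p *ᵥ w) ⟨i + 1, hi⟩ = w ⟨i, by omega⟩ - w ⟨p - 2, by omega⟩ := by
  have hL : p - 2 < p - 1 := by omega
  rw [mulVec, dotProduct, Finset.sum_eq_add ⟨i, by omega⟩ ⟨p - 2, hL⟩
    (Fin.ne_of_val_ne (show i ≠ p - 2 by omega))]
  · simp [gamma1, show i ≠ p - 2 by omega, sub_eq_add_neg]
  · intro j _ hj
    have hj₁ : (j : ℕ) ≠ i := fun h => hj.1 (Fin.ext h)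
    have hj₂ : (j : ℕ) ≠ p - 2 := fun h => hj.2 (Fin.ext h)
    simp [gamma1, hj₂, Ne.symm hj₁]
  all_goals simp

end gamma1

theorem gamma2_pow (p k : ℕ) : gamma2 p ^ k = (1 + k * p : ZMod (p ^ 2)) • 1 := by
  rw [gamma2, smul_pow, one_pow, add_comm,
    one_add_pow_of_mul_self_eq_zero (ZMod.natCast_mul_self_eq_zero p)]

theorem gamma2_sub_one (p : ℕ) : gamma2 p - 1 = (p : ZMod (p ^ 2)) • 1 := by
  rw [gamma2, add_smul, one_smul, add_sub_cancel_right]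

theorem v2_eq_smul (p : ℕ) :
    v2 p = (p : ZMod (p ^ 2)) • fun i : Fin (p - 1) => if (i : ℕ) = p - 2 then 0 else 1 := by
  ext i
  simp only [v2, Pi.smul_apply, smul_eq_mul]
  split_ifs <;> simp

theorem gamma2_pow_mulVec_v2 (p k : ℕ) : gamma2 p ^ k *ᵥ v2 p = v2 p := by
  rw [gamma2_pow, smul_mulVec, one_mulVec, v2_eq_smul, smul_smul, add_mul, mul_assoc,
    ZMod.natCast_mul_self_eq_zero, mul_zero, add_zero, one_mul]

theorem sum_gamma2_pow_mulVec_v2 (p h : ℕ) :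
    (∑ k ∈ range h, gamma2 p ^ k) *ᵥ v2 p = (h : ZMod (p ^ 2)) • v2 p := by
  simp only [sum_mulVec, gamma2_pow_mulVec_v2, sum_const, card_range, Nat.cast_smul_eq_nsmul]

theorem gamma1_mul_gamma2_pow_sub_one_mulVec (p h : ℕ) (w : Fin (p - 1) → ZMod (p ^ 2)) :
    (gamma1 p * gamma2 p ^ h - 1) *ᵥ w = (1 + h * p : ZMod (p ^ 2)) • (gamma1 p *ᵥ w) - w := by
  rw [gamma2_pow, Matrix.mul_smul, mul_one, sub_mulVec, smul_mulVec, one_mulVec]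

/-- Solution of the first claim; modulo `p` the last coordinate `-1` is forced. -/
def cocycleSolution (p h : ℕ) : Fin (p - 1) → ZMod (p ^ 2) := fun i =>
  if (i : ℕ) = p - 2 then -1 else (i : ℕ) + 2 - p + h * p * (((i : ℕ) + 2).choose 2 : ℕ)

theorem smul_gamma1_mulVec_cocycleSolution_sub {p : ℕ} (hodd : Odd p) (h : ℕ) :
    (1 + h * p : ZMod (p ^ 2)) • (gamma1 p *ᵥ cocycleSolution p h) - cocycleSolution p h
      = v1 p + (h : ZMod (p ^ 2)) • (gamma1 p *ᵥ v2 p) := by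
  have hsq := ZMod.natCast_mul_self_eq_zero p
  ext ⟨i, hi⟩
  have hp : 3 ≤ p := by obtain ⟨m, rfl⟩ := hodd; omega
  simp only [Pi.add_apply, Pi.sub_apply, Pi.smul_apply, smul_eq_mul]
  rcases i with _ | i
  · rw [gamma1_mulVec_zero, gamma1_mulVec_zero]
    simp only [cocycleSolution, v1, v2, show 0 ≠ p - 2 by omega, ↓reduceIte, neg_neg, Nat.cast_zero,
      zero_add, Nat.choose_self, Nat.cast_one, neg_zero, mul_zero, add_zero]
    ring
  rw [gamma1_mulVec_succ _ i hi, gamma1_mulVec_succ _ i hi]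
  by_cases hlast : i + 1 = p - 2
  · have hkey : (p : ZMod (p ^ 2)) * ((i + 2).choose 2 : ℕ) = p := by
      rw [show i + 2 = p - 1 by omega, ZMod.natCast_mul_choose_pred_two hodd]
    have hpi := congrArg (Nat.cast : ℕ → ZMod (p ^ 2)) (show p = i + 3 by omega)
    push_cast at hpi
    simp only [cocycleSolution, v1, v2, hlast, show i ≠ p - 2 by omega, show p - 2 ≠ 0 by omega,
      ↓reduceIte, sub_neg_eq_add, sub_zero]
    linear_combination (h + h ^ 2 * p : ZMod (p ^ 2)) * hkey + (h : ZMod (p ^ 2)) ^ 2 * hsq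
      - (1 + h * p : ZMod (p ^ 2)) * hpi
  · have hchoose : (i + 3).choose 2 = (i + 2).choose 2 + (i + 2) := by
      rw [Nat.choose_succ_succ, Nat.choose_one_right, add_comm]
    simp only [cocycleSolution, v1, v2, hlast, show i ≠ p - 2 by omega, hchoose, ↓reduceIte,
      Nat.add_eq_zero_iff, one_ne_zero, and_false, sub_neg_eq_add, sub_zero, zero_add]
    push_cast
    linear_combination (-(h : ZMod (p ^ 2)) + h ^ 2 * ((i + 2).choose 2 : ℕ)) * hsq

theorem local_conditions_for_cocycle_values_general
    (p : ℕ) (hodd : Odd p) (h : ℕ) :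
    (v1 p + (gamma1 p).mulVec ((∑ k ∈ Finset.range h, gamma2 p ^ k).mulVec (v2 p)))
        ∈ Set.range (fun w : Fin (p - 1) → ZMod (p ^ 2) =>
            (gamma1 p * gamma2 p ^ h - 1).mulVec w) ∧
      v2 p ∈ Set.range (fun w : Fin (p - 1) → ZMod (p ^ 2) =>
        (gamma2 p - 1).mulVec w) := by
  refine ⟨⟨cocycleSolution p h, ?_⟩, ⟨fun i => if (i : ℕ) = p - 2 then 0 else 1, ?_⟩⟩
  · dsimp only
    rw [gamma1_mul_gamma2_pow_sub_one_mulVec, sum_gamma2_pow_mulVec_v2, mulVec_smul]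
    exact smul_gamma1_mulVec_cocycleSolution_sub hodd h
  · dsimp only
    rw [gamma2_sub_one, smul_mulVec, one_mulVec, v2_eq_smul]

/-- Let `p` be an odd prime. For every `h ∈ {0, 1, …, p-1}`, the
vector `v1 + γ1·(1 + γ2 + ⋯ + γ2^{h-1})·v2` lies in the image of multiplication by
`γ1·γ2^h - 1` on `(ℤ/p²ℤ)^{p-1}` (for `h = 0` the sum `1 + γ2 + ⋯ + γ2^{h-1}` is the
zero matrix), and `v2` lies in the image of multiplication by `γ2 - 1`. -/
theorem local_conditions_for_cocycle_values
    (p : ℕ) (hp : p.Prime) (hodd : Odd p) (h : ℕ) (hh : h < p) :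
    (v1 p + (gamma1 p).mulVec ((∑ k ∈ Finset.range h, gamma2 p ^ k).mulVec (v2 p)))
        ∈ Set.range (fun w : Fin (p - 1) → ZMod (p ^ 2) =>
            (gamma1 p * gamma2 p ^ h - 1).mulVec w) ∧
      v2 p ∈ Set.range (fun w : Fin (p - 1) → ZMod (p ^ 2) =>
        (gamma2 p - 1).mulVec w) :=
  local_conditions_for_cocycle_values_general p hodd h
end

section
/- Let p be an odd prime, let n ≥ 1, and let G be a finite subgroup of GL_r(ℤ/p^nℤ) that is the image under entrywise reduction modulo p^n of a finite subgroup Δ of GL_r(ℤ). Then the reduction-modulo-p homomorphism GL_r(ℤ/p^nℤ) → GL_r(ℤ/pℤ) is injective on G. -/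
open Finset

private lemma entry_pow_dvd_aux19 {r : ℕ} (d : ℤ) (P : Matrix (Fin r) (Fin r) ℤ)
    (h : ∀ i j, d ∣ P i j) : ∀ (m : ℕ) (i j : Fin r), m ≠ 0 → d ^ m ∣ (P ^ m) i j := by
  intro m
  induction m with
  | zero => simp
  | succ m ih =>
    intro i j _
    rcases eq_or_ne m 0 with hm | hm
    · subst hm; simpa using h i j
    · rw [pow_succ, pow_succ, Matrix.mul_apply]
      exact Finset.dvd_sum fun l _ => mul_dvd_mul (ih i l hm) (h l j)

private lemma one_add_pow_aux19 {R : Type*} [Ring R] (P : R) (q : ℕ) (hq : 2 ≤ q) :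
    (1 + P) ^ q = 1 + q • P + ∑ m ∈ Finset.Icc 2 q, q.choose m • P ^ m := by
  have hc : Commute P (1 : R) := Commute.one_right P
  have hexp := hc.add_pow q
  have hset : Finset.range (q + 1) = insert 0 (insert 1 (Finset.Icc 2 q)) := by
    ext x
    simp only [Finset.mem_range, Finset.mem_insert, Finset.mem_Icc]
    omega
  rw [add_comm (1 : R) P, hexp, hset, Finset.sum_insert, Finset.sum_insert]
  · simp only [pow_zero, pow_one, one_pow, mul_one, one_mul, Nat.choose_zero_right,
      Nat.choose_one_right, Nat.cast_one]
    have h2 : ∀ m ∈ Finset.Icc 2 q, P ^ m * (q.choose m : R)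
        = q.choose m • P ^ m := by
      intro m _
      rw [nsmul_eq_mul, (Nat.cast_commute (q.choose m) (P ^ m)).eq]
    rw [Finset.sum_congr rfl h2, nsmul_eq_mul, (Nat.cast_commute q P).eq, add_assoc]
  · simp
  · simp

private lemma step_lemma_aux19 {r : ℕ} (p q k : ℕ) (hp : p.Prime) (hq : q.Prime) (hodd : Odd p)
    (hk : 1 ≤ k) (P : Matrix (Fin r) (Fin r) ℤ)
    (hdvd : ∀ i j, (p : ℤ) ^ k ∣ P i j) (hA : (1 + P) ^ q = 1) :
    ∀ i j, (p : ℤ) ^ (k + 1) ∣ P i j := by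
  intro i j
  have hq2 : 2 ≤ q := hq.two_le
  have hbin := one_add_pow_aux19 P q hq2
  rw [hA, add_assoc] at hbin
  have h0 : q • P + ∑ m ∈ Finset.Icc 2 q, q.choose m • P ^ m = 0 :=
    (left_eq_add.mp hbin)
  have h1 := congrFun (congrFun h0 i) j
  simp only [Matrix.add_apply, Matrix.smul_apply, Matrix.sum_apply, Matrix.zero_apply] at h1
  simp only [nsmul_eq_mul] at h1
  have hsum : (q : ℤ) * P i j
      = - ∑ m ∈ Finset.Icc 2 q, (q.choose m : ℤ) * (P ^ m) i j := by linarith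
  have hpow : ∀ m ∈ Finset.Icc 2 q, ((p : ℤ)) ^ (2 * k) ∣ (P ^ m) i j := by
    intro m hm
    rw [Finset.mem_Icc] at hm
    have h2 : ((p : ℤ) ^ k) ^ m ∣ (P ^ m) i j := entry_pow_dvd_aux19 _ P hdvd m i j (by omega)
    rw [← pow_mul] at h2
    exact dvd_trans (pow_dvd_pow _ (by nlinarith [hm.1])) h2
  rcases eq_or_ne q p with hqp | hqp
  · -- q = p : work mod q^(k+2)
    rw [← hqp] at hdvd hpow hodd ⊢
    have h3 : 3 ≤ q := by
      have := hq.two_le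
      rcases hodd with ⟨t, ht⟩; omega
    have hsum2 : (q : ℤ) ^ (k + 2) ∣ (q : ℤ) * P i j := by
      rw [hsum]
      apply dvd_neg.mpr
      apply Finset.dvd_sum
      intro m hm
      rw [Finset.mem_Icc] at hm
      rcases eq_or_ne m q with hmq | hmq
      · have h2 : ((q : ℤ) ^ k) ^ m ∣ (P ^ m) i j := entry_pow_dvd_aux19 _ P hdvd m i j (by omega)
        rw [← pow_mul] at h2
        have h3m : 3 ≤ m := hmq ▸ h3
        exact Dvd.dvd.mul_left
          (dvd_trans (pow_dvd_pow _ (by nlinarith)) h2) _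
      · have hc : (q : ℤ) ∣ (q.choose m : ℤ) := by
          exact_mod_cast Int.natCast_dvd_natCast.mpr
            (Nat.Prime.dvd_choose_self hq (by omega) (by omega))
        have h2 : (q : ℤ) ^ (2 * k) ∣ (P ^ m) i j :=
          hpow m (Finset.mem_Icc.mpr ⟨hm.1, hm.2⟩)
        calc (q : ℤ) ^ (k + 2) ∣ (q : ℤ) * (q : ℤ) ^ (2 * k) := by
              rw [← pow_succ']
              exact pow_dvd_pow _ (by omega)
          _ ∣ (q.choose m : ℤ) * (P ^ m) i j := mul_dvd_mul hc h2
    have hq0 : (q : ℤ) ≠ 0 := by exact_mod_cast hq.ne_zero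
    rw [pow_succ', pow_succ'] at hsum2
    exact (mul_dvd_mul_iff_left hq0).mp (by rwa [← pow_succ'] at hsum2)
  · -- q ≠ p
    have hsum2 : (p : ℤ) ^ (k + 1) ∣ (q : ℤ) * P i j := by
      rw [hsum]
      apply dvd_neg.mpr
      apply Finset.dvd_sum
      intro m hm
      exact Dvd.dvd.mul_left
        (dvd_trans (pow_dvd_pow _ (by omega)) (hpow m hm)) _
    have hcop : IsCoprime ((p : ℤ) ^ (k + 1)) (q : ℤ) := by
      have := Nat.Coprime.isCoprime (Nat.Coprime.pow_left (k + 1)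
        ((Nat.coprime_primes hp hq).mpr (Ne.symm hqp)))
      rwa [Nat.cast_pow] at this
    exact hcop.dvd_of_dvd_mul_left hsum2

private lemma eq_one_of_prime_order_aux19 {r : ℕ} (p q : ℕ) (hp : p.Prime) (hq : q.Prime)
    (hodd : Odd p) (A : Matrix (Fin r) (Fin r) ℤ) (hA : A ^ q = 1)
    (hd : ∀ i j, (p : ℤ) ∣ (A - 1) i j) : A = 1 := by
  set P := A - 1 with hP
  have h1P : 1 + P = A := by rw [hP]; abel
  have hA' : (1 + P) ^ q = 1 := by rw [h1P]; exact hA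
  have key : ∀ k, 1 ≤ k → ∀ i j, (p : ℤ) ^ k ∣ P i j := by
    intro k
    induction k with
    | zero => omega
    | succ k ih =>
      intro _
      rcases eq_or_ne k 0 with hk0 | hk0
      · subst hk0; intro i j; simpa using hd i j
      · exact step_lemma_aux19 p q k hp hq hodd (by omega) P (ih (by omega)) hA'
  have hz : ∀ i j, P i j = 0 := by
    intro i j
    by_contra hne
    set x := P i j with hx
    have hk := key (x.natAbs + 1) (by omega) i j
    have h1 : (p : ℤ) ^ (x.natAbs + 1) ≤ |x| :=
      Int.le_of_dvd (abs_pos.mpr hne) ((dvd_abs _ _).mpr hk)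
    have h2 : |x| < (p : ℤ) ^ (x.natAbs + 1) := by
      have hnat : x.natAbs < p ^ (x.natAbs + 1) :=
        lt_of_lt_of_le (lt_of_lt_of_le (Nat.lt_two_pow_self)
          (Nat.pow_le_pow_right (by norm_num) (Nat.le_succ _)))
          (Nat.pow_le_pow_left hp.two_le _)
      calc |x| = (x.natAbs : ℤ) := Int.abs_eq_natAbs x
        _ < ((p ^ (x.natAbs + 1) : ℕ) : ℤ) := by exact_mod_cast hnat
        _ = (p : ℤ) ^ (x.natAbs + 1) := by push_cast; ring
    linarith
  have : P = 0 := by ext i j; exact hz i j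
  have := sub_eq_zero.mp (hP ▸ this)
  exact this

private lemma eq_one_of_finite_order_aux19 {r : ℕ} (p : ℕ) (hp : p.Prime) (hodd : Odd p)
    (A : Matrix (Fin r) (Fin r) ℤ)
    (hd : ∀ i j, (p : ℤ) ∣ (A - 1) i j) :
    ∀ m : ℕ, m ≠ 0 → A ^ m = 1 → A = 1 := by
  intro m
  induction m using Nat.strong_induction_on with
  | _ m ih =>
    intro hm hA
    rcases eq_or_ne m 1 with rfl | hm1
    · simpa using hA
    · obtain ⟨q, hqp, hqd⟩ := Nat.exists_prime_and_dvd hm1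
      have hmpos : 0 < m := Nat.pos_of_ne_zero hm
      have hdivpos : 0 < m / q := Nat.div_pos (Nat.le_of_dvd hmpos hqd) hqp.pos
      have hBq : (A ^ (m / q)) ^ q = 1 := by
        rw [← pow_mul, Nat.div_mul_cancel hqd, hA]
      -- reduction mod p of A is 1
      have hdB : ∀ i j, (p : ℤ) ∣ (A ^ (m / q) - 1) i j := by
        set φ : Matrix (Fin r) (Fin r) ℤ →+* Matrix (Fin r) (Fin r) (ZMod p) := (Int.castRingHom (ZMod p)).mapMatrix with hφ
        have hφA : φ A = 1 := by
          have h0 : φ (A - 1) = 0 := by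
            ext i j
            rw [hφ, RingHom.mapMatrix_apply, Matrix.map_apply]
            exact (ZMod.intCast_zmod_eq_zero_iff_dvd _ p).mpr (hd i j)
          have := map_sub φ A 1
          rw [map_one, h0] at this
          exact (sub_eq_zero.mp this.symm)
        intro i j
        have h0 : φ (A ^ (m / q) - 1) = 0 := by
          rw [map_sub, map_pow, hφA, one_pow, map_one, sub_self]
        have := congrFun (congrFun h0 i) j
        rw [hφ, RingHom.mapMatrix_apply, Matrix.map_apply, Matrix.zero_apply] at this
        exact (ZMod.intCast_zmod_eq_zero_iff_dvd _ p).mp this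
      have hB1 : A ^ (m / q) = 1 :=
        eq_one_of_prime_order_aux19 p q hp hqp hodd _ hBq hdB
      exact ih (m / q) (Nat.div_lt_self hmpos hqp.one_lt) (Nat.pos_iff_ne_zero.mp hdivpos) hB1

/-- Let `p` be an odd prime, `n ≥ 1`, and let `G` be a finite subgroup
of `GL_r(ℤ/p^nℤ)` that is the image under entrywise reduction modulo `p^n` of a finite
subgroup `Δ` of `GL_r(ℤ)`. Then the reduction-modulo-`p` homomorphism
`GL_r(ℤ/p^nℤ) → GL_r(ℤ/pℤ)` is injective on `G`. -/
theorem reduction_mod_p_injective_on_image_of_integral_subgroup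
    (p : ℕ) (hp : p.Prime) (hodd : Odd p) (n r : ℕ) (hn : 1 ≤ n)
    (Δ : Subgroup (GL (Fin r) ℤ)) (hΔ : Finite Δ)
    (G : Subgroup (GL (Fin r) (ZMod (p ^ n))))
    (hG : G = Δ.map (Matrix.GeneralLinearGroup.map (Int.castRingHom (ZMod (p ^ n))))) :
    Set.InjOn
      (Matrix.GeneralLinearGroup.map
        (ZMod.castHom (dvd_pow_self p (Nat.one_le_iff_ne_zero.mp hn)) (ZMod p)))
      (G : Set (GL (Fin r) (ZMod (p ^ n)))) := by
  intro g hg h hh heq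
  rw [hG] at hg hh
  obtain ⟨δ₁, hδ₁, rfl⟩ := hg
  obtain ⟨δ₂, hδ₂, rfl⟩ := hh
  have hcomp : ∀ δ : GL (Fin r) ℤ,
      (Matrix.GeneralLinearGroup.map
          (ZMod.castHom (dvd_pow_self p (Nat.one_le_iff_ne_zero.mp hn)) (ZMod p)))
        (Matrix.GeneralLinearGroup.map (Int.castRingHom (ZMod (p ^ n))) δ)
      = Matrix.GeneralLinearGroup.map (Int.castRingHom (ZMod p)) δ := by
    intro δ
    rw [← Matrix.GeneralLinearGroup.map_comp_apply]
    rw [← Matrix.GeneralLinearGroup.map_comp]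
    have heqhom : (ZMod.castHom (dvd_pow_self p (Nat.one_le_iff_ne_zero.mp hn))
        (ZMod p)).comp (Int.castRingHom (ZMod (p ^ n))) = Int.castRingHom (ZMod p) :=
      Subsingleton.elim _ _
    rw [heqhom]
  rw [hcomp δ₁, hcomp δ₂] at heq
  set F := Matrix.GeneralLinearGroup.map (n := Fin r) (Int.castRingHom (ZMod p)) with hF
  set δ := δ₁ * δ₂⁻¹ with hδ
  have hδmem : δ ∈ Δ := mul_mem hδ₁ (inv_mem hδ₂)
  have hFδ : F δ = 1 := by
    rw [hδ, map_mul, map_inv, heq, mul_inv_cancel]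
  -- finite order
  haveI := hΔ
  set x : Δ := ⟨δ, hδmem⟩ with hx
  have hxo : x ^ orderOf x = 1 := pow_orderOf_eq_one x
  have hone : orderOf x ≠ 0 := (orderOf_pos x).ne'
  have hδo : δ ^ orderOf x = 1 := by
    have := congrArg (Subtype.val) hxo
    rwa [SubmonoidClass.coe_pow] at this
  have hMo : (δ : Matrix (Fin r) (Fin r) ℤ) ^ orderOf x = 1 := by
    have := congrArg Units.val hδo
    simpa using this
  -- divisibility
  have hd : ∀ i j, (p : ℤ) ∣ ((δ : Matrix (Fin r) (Fin r) ℤ) - 1) i j := by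
    have hval : ((δ : Matrix (Fin r) (Fin r) ℤ)).map (Int.castRingHom (ZMod p))
        = (1 : Matrix (Fin r) (Fin r) (ZMod p)) := by
      have := congrArg Units.val hFδ
      simpa [hF, Matrix.GeneralLinearGroup.map, RingHom.mapMatrix_apply] using this
    intro i j
    have h0 : (((δ : Matrix (Fin r) (Fin r) ℤ) - 1) i j : ℤ) = (δ : Matrix (Fin r) (Fin r) ℤ) i j - (1 : Matrix (Fin r) (Fin r) ℤ) i j := by
      simp [Matrix.sub_apply]
    rw [← ZMod.intCast_zmod_eq_zero_iff_dvd]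
    have h1 := congrFun (congrFun hval i) j
    rw [Matrix.map_apply] at h1
    push_cast [h0]
    have h1' : (((δ : Matrix (Fin r) (Fin r) ℤ) i j : ℤ) : ZMod p)
        = (1 : Matrix (Fin r) (Fin r) (ZMod p)) i j := h1
    rw [h1']
    by_cases hij : i = j <;> simp [hij, Matrix.one_apply]
  have hδ1 : (δ : Matrix (Fin r) (Fin r) ℤ) = 1 :=
    eq_one_of_finite_order_aux19 p hp hodd _ hd (orderOf x) hone hMo
  have : δ = 1 := Units.ext hδ1
  have h12 : δ₁ = δ₂ := by
    rw [hδ] at this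
    exact mul_inv_eq_one.mp this
  rw [h12]
end
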